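/- arXiv:1109.3656 — 9 statements merged into one kernel-verified Lean document; each statement's English description precedes it below -/
import Mathlib

section
/- Let n ≥ 1, let w ∈ R^n be a column vector, and let i ≠ j be two indices in {1,…,n}. Then there exists a unimodular matrix E ∈ R^{n×n} that agrees with the identity matrix except possibly in the four entries in positions (i,i), (i,j), (j,i), (j,j), such that the vector u = E·w satisfies: u_j = 0, u_k = w_k for all k ∉ {i,j}, and the left ideal R·u_i equals the left ideal R·w_i + R·w_j (i.e. u_i is a greatest common right divisor of w_i and w_j). -/
/-!
The Euclidean algorithm on the coordinates `w i`, `w j`, performed by row operations. If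
`w j ≠ 0`, write `w i = q * w j + r` with `deg r < deg (w j)`; subtracting `q` times row `j` from
row `i` and then swapping rows `i` and `j` replaces `(w i, w j)` by `(w j, r)`, so well-founded
induction on the degree of the `j`-th coordinate drives it to `0`. These row operations are
invertible matrices agreeing with the identity outside the block `{i, j} × {i, j}`, and such
matrices form a group. For any such matrix the new `i`, `j` coordinates are left combinations of
the old ones, and applying this also to its inverse shows that the left ideal generated by the
two coordinates does not change.
-/

namespace Matrix

variable {ι R : Type*} [DecidableEq ι] [Ring R]

def IsOneOutside (s : Set ι) (E : Matrix ι ι R) : Prop :=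
  ∀ k l, ¬ (k ∈ s ∧ l ∈ s) → E k l = (1 : Matrix ι ι R) k l

namespace IsOneOutside

variable {s : Set ι} {E F : Matrix ι ι R} {k l : ι}

theorem row_eq (hE : IsOneOutside s E) (hk : k ∉ s) : E k = (1 : Matrix ι ι R) k :=
  funext fun l => hE k l fun h => hk h.1

variable [Fintype ι]

theorem mul_apply_of_notMem_left (hE : IsOneOutside s E) (hk : k ∉ s) (F : Matrix ι ι R) :
    (E * F) k l = F k l := by
  rw [mul_apply', hE.row_eq hk, ← mul_apply', one_mul]

theorem mul_apply_of_notMem_right (hF : IsOneOutside s F) (hl : l ∉ s) (E : Matrix ι ι R) :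
    (E * F) k l = E k l := by
  rw [mul_apply', show (fun m => F m l) = fun m => (1 : Matrix ι ι R) m l from
    funext fun m => hF m l fun h => hl h.2, ← mul_apply', mul_one]

theorem mul (hE : IsOneOutside s E) (hF : IsOneOutside s F) : IsOneOutside s (E * F) := by
  intro k l hkl
  by_cases hk : k ∈ s
  · have hl : l ∉ s := fun hl => hkl ⟨hk, hl⟩
    rw [hF.mul_apply_of_notMem_right hl, hE k l hkl]
  · rw [hE.mul_apply_of_notMem_left hk, hF k l hkl]

theorem of_mul_eq_one {V : Matrix ι ι R} (hE : IsOneOutside s E) (hEV : E * V = 1)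
    (hVE : V * E = 1) : IsOneOutside s V := by
  intro k l hkl
  by_cases hk : k ∈ s
  · have hl : l ∉ s := fun hl => hkl ⟨hk, hl⟩
    rw [← hE.mul_apply_of_notMem_right hl V, hVE]
  · rw [← hE.mul_apply_of_notMem_left hk V, hEV]

theorem mulVec_apply_of_notMem (hE : IsOneOutside s E) (hk : k ∉ s) (w : ι → R) :
    (E *ᵥ w) k = w k := by
  rw [mulVec, hE.row_eq hk, ← mulVec, one_mulVec]

theorem mulVec_apply_mem_span (hE : IsOneOutside s E) (hk : k ∈ s) (w : ι → R) :
    (E *ᵥ w) k ∈ Submodule.span R (w '' s) := by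
  refine Submodule.sum_mem _ fun m _ => ?_
  change E k m * w m ∈ _
  by_cases hm : m ∈ s
  · exact Submodule.smul_mem _ _ (Submodule.subset_span ⟨m, hm, rfl⟩)
  · rw [hE k m fun h => hm h.2, one_apply_ne (ne_of_mem_of_not_mem hk hm), zero_mul]
    exact Submodule.zero_mem _

end IsOneOutside

variable [Fintype ι]

def unitsActingOn (s : Set ι) : Subgroup (Matrix ι ι R)ˣ where
  carrier := {E | IsOneOutside s (E : Matrix ι ι R)}
  one_mem' := fun _ _ _ => rfl
  mul_mem' := IsOneOutside.mul
  inv_mem' {E} hE := hE.of_mul_eq_one E.mul_inv E.inv_mul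

theorem span_image_mulVec {s : Set ι} {E : (Matrix ι ι R)ˣ} (hE : E ∈ unitsActingOn s)
    (w : ι → R) : Submodule.span R ((E *ᵥ w) '' s) = Submodule.span R (w '' s) := by
  have key : ∀ F : (Matrix ι ι R)ˣ, F ∈ unitsActingOn s → ∀ v : ι → R,
      Submodule.span R (((F : Matrix ι ι R) *ᵥ v) '' s) ≤ Submodule.span R (v '' s) := by
    refine fun F hF v => Submodule.span_le.mpr ?_
    rintro _ ⟨k, hk, rfl⟩
    exact IsOneOutside.mulVec_apply_mem_span hF hk v
  refine le_antisymm (key E hE w) ?_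
  simpa [mulVec_mulVec] using key E⁻¹ (inv_mem hE) (E *ᵥ w)

section EuclideanAlgorithm

variable {i j : ι}

def transvectionUnit (hij : i ≠ j) (c : R) : (Matrix ι ι R)ˣ where
  val := 1 + single i j c
  inv := 1 + single i j (-c)
  val_inv := by
    simp [mul_add, add_mul, single_mul_single_of_ne _ i j i hij.symm, add_assoc, ← single_add]
  inv_val := by
    simp [mul_add, add_mul, single_mul_single_of_ne _ i j i hij.symm, add_assoc, ← single_add]

def swapUnit (i j : ι) : (Matrix ι ι R)ˣ where
  val := (Equiv.swap i j).permMatrix R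
  inv := (Equiv.swap i j).permMatrix R
  val_inv := by rw [← permMatrix_mul, Equiv.swap_mul_self, permMatrix_one]
  inv_val := by rw [← permMatrix_mul, Equiv.swap_mul_self, permMatrix_one]

theorem transvectionUnit_mulVec_apply_self (hij : i ≠ j) (c : R) (w : ι → R) :
    ((transvectionUnit hij c : Matrix ι ι R) *ᵥ w) i = w i + c * w j := by
  simp [transvectionUnit, add_mulVec, single_mulVec]

theorem swapUnit_mulVec (i j : ι) (w : ι → R) :
    (((swapUnit i j : (Matrix ι ι R)ˣ) : Matrix ι ι R) *ᵥ w) = w ∘ Equiv.swap i j := by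
  simp [swapUnit, PEquiv.toMatrix_toPEquiv_mulVec]

theorem transvectionUnit_mem_unitsActingOn (hij : i ≠ j) (c : R) :
    transvectionUnit hij c ∈ unitsActingOn {i, j} := by
  intro k l hkl
  have : ¬ (i = k ∧ j = l) := fun ⟨hk, hl⟩ => hkl ⟨.inl hk.symm, .inr hl.symm⟩
  simp [transvectionUnit, this]

theorem swapUnit_mem_unitsActingOn (i j : ι) :
    (swapUnit i j : (Matrix ι ι R)ˣ) ∈ unitsActingOn {i, j} := by
  intro k l hkl
  by_cases hk : k = i ∨ k = j
  · have hl : l ≠ i ∧ l ≠ j := by simpa using fun h => hkl ⟨hk, h⟩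
    simp [swapUnit, PEquiv.toMatrix_apply, one_apply, Equiv.swap_apply_eq_iff,
      Equiv.swap_apply_of_ne_of_ne hl.1 hl.2]
  · simp only [not_or] at hk
    simp [swapUnit, PEquiv.toMatrix_apply, one_apply, Equiv.swap_apply_of_ne_of_ne hk.1 hk.2]

theorem exists_mem_unitsActingOn_mulVec_apply_eq_zero {Γ : Type*} [LT Γ] [WellFoundedLT Γ]
    (deg : R → Γ) (hdiv : ∀ f g : R, g ≠ 0 → ∃ q r : R, f = q * g + r ∧ deg r < deg g)
    (hij : i ≠ j) (w : ι → R) :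
    ∃ E : (Matrix ι ι R)ˣ, E ∈ unitsActingOn {i, j} ∧ ((E : Matrix ι ι R) *ᵥ w) j = 0 := by
  induction hw : deg (w j) using WellFoundedLT.induction generalizing w with
  | _ d ih =>
    by_cases hwj : w j = 0
    · exact ⟨1, one_mem _, by simpa using hwj⟩
    obtain ⟨q, r, hqr, hr⟩ := hdiv (w i) (w j) hwj
    set S := swapUnit i j * transvectionUnit hij (-q)
    have hS : S ∈ unitsActingOn {i, j} :=
      mul_mem (swapUnit_mem_unitsActingOn i j) (transvectionUnit_mem_unitsActingOn hij _)
    have hSw : ((S : Matrix ι ι R) *ᵥ w) j = r := by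
      rw [Units.val_mul, ← mulVec_mulVec, swapUnit_mulVec, Function.comp_apply,
        Equiv.swap_apply_right, transvectionUnit_mulVec_apply_self, hqr]
      noncomm_ring
    obtain ⟨E, hE, hESw⟩ := ih _ (hw ▸ hSw ▸ hr) _ rfl
    exact ⟨E * S, mul_mem hE hS, by rwa [Units.val_mul, ← mulVec_mulVec]⟩

end EuclideanAlgorithm

end Matrix

theorem stmt0_general
    {R : Type*} [Ring R]
    (degD : R → WithBot ℕ)
    (hdivision : ∀ f g : R, g ≠ 0 → ∃ q rem : R, f = q * g + rem ∧ degD rem < degD g)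
    {n : ℕ} (w : Fin n → R) (i j : Fin n) (hij : i ≠ j) :
    ∃ E : Matrix (Fin n) (Fin n) R,
      (∃ V : Matrix (Fin n) (Fin n) R, E * V = 1 ∧ V * E = 1) ∧
      (∀ k l : Fin n, ¬ ((k = i ∨ k = j) ∧ (l = i ∨ l = j)) →
        E k l = (1 : Matrix (Fin n) (Fin n) R) k l) ∧
      (E.mulVec w) j = 0 ∧
      (∀ k : Fin n, k ≠ i → k ≠ j → (E.mulVec w) k = w k) ∧
      (Submodule.span R {(E.mulVec w) i} : Submodule R R) =
        Submodule.span R {w i, w j} := by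
  obtain ⟨E, hE, hEw⟩ := Matrix.exists_mem_unitsActingOn_mulVec_apply_eq_zero degD hdivision hij w
  have hspan := Matrix.span_image_mulVec hE w
  rw [Set.image_pair, Set.image_pair, hEw, Set.pair_comm, Submodule.span_insert_zero] at hspan
  exact ⟨E, ⟨↑E⁻¹, E.mul_inv, E.inv_mul⟩, hE, hEw,
    fun k hki hkj => Matrix.IsOneOutside.mulVec_apply_of_notMem hE (by simp [hki, hkj]) w, hspan⟩

/-- Over a ring `R` (not necessarily commutative, no zero
divisors, nontrivial) equipped with a degree function `degD : R → WithBot ℕ`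
satisfying the usual axioms, such that every degree-0 element is a unit and
right division with remainder is available:  given `w ∈ R^n` and indices
`i ≠ j`, there is a unimodular matrix `E` agreeing with the identity outside
the four positions `(i,i), (i,j), (j,i), (j,j)` such that `u = E ⬝ w`
satisfies `u j = 0`, `u k = w k` for `k ∉ {i,j}`, and the left ideal
`R·(u i)` equals the left ideal `R·(w i) + R·(w j)`. -/
theorem stmt0
    {R : Type*} [Ring R] [Nontrivial R] [NoZeroDivisors R]
    (degD : R → WithBot ℕ)
    (hbot : ∀ r : R, degD r = ⊥ ↔ r = 0)
    (hmul : ∀ r s : R, degD (r * s) = degD r + degD s)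
    (hadd : ∀ r s : R, degD (r + s) ≤ max (degD r) (degD s))
    (hunit : ∀ r : R, degD r = 0 → IsUnit r)
    (hdivision : ∀ f g : R, g ≠ 0 → ∃ q rem : R, f = q * g + rem ∧ degD rem < degD g)
    {n : ℕ} (hn : 1 ≤ n) (w : Fin n → R) (i j : Fin n) (hij : i ≠ j) :
    ∃ E : Matrix (Fin n) (Fin n) R,
      (∃ V : Matrix (Fin n) (Fin n) R, E * V = 1 ∧ V * E = 1) ∧
      (∀ k l : Fin n, ¬ ((k = i ∨ k = j) ∧ (l = i ∨ l = j)) →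
        E k l = (1 : Matrix (Fin n) (Fin n) R) k l) ∧
      (E.mulVec w) j = 0 ∧
      (∀ k : Fin n, k ≠ i → k ≠ j → (E.mulVec w) k = w k) ∧
      (Submodule.span R {(E.mulVec w) i} : Submodule R R) =
        Submodule.span R {w i, w j} :=
  stmt0_general degD hdivision w i j hij
end

section
/- Let J ∈ R^{n×n} be upper triangular with all diagonal entries nonzero. Then there exists a unimodular matrix P ∈ R^{n×n} that is upper triangular with all diagonal entries equal to 1, such that (P·J)_{jj} = J_{jj} for every j, and degD (P·J)_{ij} < degD J_{jj} whenever i < j; that is, in every column of P·J the diagonal entry has degree strictly larger than the degrees of all entries above it. -/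
/-!
Reduce the columns from left to right. In column `j`, divide every entry above the diagonal on
the right by the diagonal entry, `A i j = q i * A j j + r i`, and subtract `q i` times row `j`
from row `i`. This is left multiplication by `1 - N` with `N` supported above the diagonal in
column `j`, so `N * N = 0` and `1 - N` is a unipotent upper triangular unit. Row `j` of an upper
triangular matrix vanishes left of column `j`, so the columns already reduced are not disturbed.
-/

namespace Matrix

variable {ι R : Type*} [LinearOrder ι] [Ring R]

def aboveInColumn (j : ι) (q : ι → R) : Matrix ι ι R :=
  of fun a b => if b = j ∧ a < j then q a else 0

variable [Fintype ι]

theorem IsUpperTriangular.mul_apply_self {A B : Matrix ι ι R} (hA : A.IsUpperTriangular)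
    (hB : B.IsUpperTriangular) (i : ι) : (A * B) i i = A i i * B i i := by
  rw [mul_apply, Finset.sum_eq_single i]
  · intro k _ hk
    rcases hk.lt_or_gt with h | h
    · rw [hA h, zero_mul]
    · rw [hB h, mul_zero]
  · simp

variable (ι R) in
def unitUpperTriangular : Submonoid (Matrix ι ι R) where
  carrier := {P | P.IsUpperTriangular ∧ ∀ i, P i i = 1}
  mul_mem' := fun {P Q} ⟨hP, hP1⟩ ⟨hQ, hQ1⟩ =>
    ⟨hP.mul hQ, fun i => by rw [hP.mul_apply_self hQ, hP1, hQ1, one_mul]⟩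
  one_mem' := ⟨blockTriangular_one, fun _ => one_apply_eq _⟩

theorem unitUpperTriangular_mul_apply_self {P A : Matrix ι ι R} (hP : P ∈ unitUpperTriangular ι R)
    (hA : A.IsUpperTriangular) (i : ι) : (P * A) i i = A i i := by
  rw [hP.1.mul_apply_self hA, hP.2, one_mul]

theorem aboveInColumn_mul_apply (j : ι) (q : ι → R) (A : Matrix ι ι R) (a c : ι) :
    (aboveInColumn j q * A) a c = if a < j then q a * A j c else 0 := by
  rw [mul_apply, Finset.sum_eq_single j (fun b _ hb => by simp [aboveInColumn, hb]) (by simp)]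
  split_ifs with h <;> simp [aboveInColumn, h]

theorem aboveInColumn_mul_self (j : ι) (q : ι → R) :
    aboveInColumn j q * aboveInColumn j q = 0 := by
  ext a c
  rw [aboveInColumn_mul_apply, zero_apply]
  simp [aboveInColumn]

theorem one_sub_aboveInColumn_mem (j : ι) (q : ι → R) :
    1 - aboveInColumn j q ∈ unitUpperTriangular ι R := by
  refine ⟨blockTriangular_one.sub fun a b hba => ?_, fun i => ?_⟩
  · simp only [aboveInColumn, of_apply, ite_eq_right_iff, and_imp]
    rintro rfl hab
    exact absurd (hab.trans hba) (lt_irrefl _)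
  · rw [sub_apply, one_apply_eq, sub_eq_self]
    exact if_neg fun h => h.2.ne h.1

theorem isUnit_one_sub_aboveInColumn (j : ι) (q : ι → R) : IsUnit (1 - aboveInColumn j q) :=
  IsNilpotent.isUnit_one_sub ⟨2, by rw [sq, aboveInColumn_mul_self]⟩

variable {α : Type*} [LT α] (deg : R → α)

theorem exists_unitUpperTriangular_reduce_column {A : Matrix ι ι R} (hA : A.IsUpperTriangular)
    (j : ι) (hdiv : ∀ f, ∃ q, deg (f - q * A j j) < deg (A j j)) :
    ∃ Q ∈ unitUpperTriangular ι R, IsUnit Q ∧ (∀ i c, c < j → (Q * A) i c = A i c) ∧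
      ∀ i < j, deg ((Q * A) i j) < deg (A j j) := by
  choose q hq using hdiv
  set Q := 1 - aboveInColumn j fun i => q (A i j)
  have hQA : ∀ i c, (Q * A) i c = A i c - if i < j then q (A i j) * A j c else 0 := by
    intro i c
    rw [sub_mul, one_mul, sub_apply, aboveInColumn_mul_apply]
  refine ⟨Q, one_sub_aboveInColumn_mem j _, isUnit_one_sub_aboveInColumn j _, fun i c hc => ?_,
    fun i hi => ?_⟩
  · rw [hQA, hA hc]
    simp
  · rw [hQA, if_pos hi]
    exact hq _

theorem exists_unitUpperTriangular_mul_reduced {A : Matrix ι ι R} (hA : A.IsUpperTriangular)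
    (hdiv : ∀ j f, ∃ q, deg (f - q * A j j) < deg (A j j)) :
    ∃ P ∈ unitUpperTriangular ι R, IsUnit P ∧ ∀ i c, i < c → deg ((P * A) i c) < deg (A c c) := by
  suffices h : ∀ s : Finset ι, ∃ P ∈ unitUpperTriangular ι R, IsUnit P ∧
      ∀ c ∈ s, ∀ i < c, deg ((P * A) i c) < deg (A c c) by
    obtain ⟨P, hP, hPunit, hred⟩ := h Finset.univ
    exact ⟨P, hP, hPunit, fun i c hic => hred c (Finset.mem_univ c) i hic⟩
  intro s
  induction s using Finset.induction_on_max with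
  | empty => exact ⟨1, one_mem _, isUnit_one, by simp⟩
  | insert a s hlt ih =>
    obtain ⟨P, hP, hPunit, hred⟩ := ih
    have hPA : (P * A).IsUpperTriangular := hP.1.mul hA
    have hPAa := unitUpperTriangular_mul_apply_self hP hA a
    obtain ⟨Q, hQ, hQunit, hfix, hreda⟩ :=
      exists_unitUpperTriangular_reduce_column deg hPA a (hPAa ▸ hdiv a)
    refine ⟨Q * P, mul_mem hQ hP, hQunit.mul hPunit, fun c hc i hic => ?_⟩
    rw [Matrix.mul_assoc]
    rcases Finset.mem_insert.mp hc with rfl | hc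
    · exact hPAa ▸ hreda i hic
    · rw [hfix i c (hlt c hc)]
      exact hred c hc i hic

end Matrix

theorem stmt1_general
    {R : Type*} [Ring R]
    (degD : R → WithBot ℕ)
    (hdivision : ∀ f g : R, g ≠ 0 → ∃ q rem : R, f = q * g + rem ∧ degD rem < degD g)
    {n : ℕ} (J : Matrix (Fin n) (Fin n) R)
    (hJut : ∀ i j : Fin n, j < i → J i j = 0)
    (hJdiag : ∀ i : Fin n, J i i ≠ 0) :
    ∃ P : Matrix (Fin n) (Fin n) R,
      (∃ V : Matrix (Fin n) (Fin n) R, P * V = 1 ∧ V * P = 1) ∧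
      (∀ i j : Fin n, j < i → P i j = 0) ∧
      (∀ i : Fin n, P i i = 1) ∧
      (∀ j : Fin n, (P * J) j j = J j j) ∧
      (∀ i j : Fin n, i < j → degD ((P * J) i j) < degD (J j j)) := by
  have hdiv (j : Fin n) (f : R) : ∃ q, degD (f - q * J j j) < degD (J j j) := by
    obtain ⟨q, rem, rfl, hrem⟩ := hdivision f (J j j) (hJdiag j)
    exact ⟨q, by rwa [add_sub_cancel_left]⟩
  obtain ⟨P, hP, hPunit, hred⟩ := Matrix.exists_unitUpperTriangular_mul_reduced degD hJut hdiv
  exact ⟨P, isUnit_iff_exists.mp hPunit, hP.1, hP.2,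
    Matrix.unitUpperTriangular_mul_apply_self hP hJut, hred⟩

/-- Let `J ∈ R^{n×n}` be upper triangular with nonzero
diagonal entries.  Then there is a unimodular matrix `P`, upper triangular
with diagonal entries `1`, such that `P * J` has the same diagonal as `J`
and in every column the degree of the diagonal entry strictly dominates the
degrees of the entries above it. -/
theorem stmt1
    {R : Type*} [Ring R] [Nontrivial R] [NoZeroDivisors R]
    (degD : R → WithBot ℕ)
    (hbot : ∀ r : R, degD r = ⊥ ↔ r = 0)
    (hmul : ∀ r s : R, degD (r * s) = degD r + degD s)
    (hadd : ∀ r s : R, degD (r + s) ≤ max (degD r) (degD s))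
    (hunit : ∀ r : R, degD r = 0 → IsUnit r)
    (hdivision : ∀ f g : R, g ≠ 0 → ∃ q rem : R, f = q * g + rem ∧ degD rem < degD g)
    {n : ℕ} (J : Matrix (Fin n) (Fin n) R)
    (hJut : ∀ i j : Fin n, j < i → J i j = 0)
    (hJdiag : ∀ i : Fin n, J i i ≠ 0) :
    ∃ P : Matrix (Fin n) (Fin n) R,
      (∃ V : Matrix (Fin n) (Fin n) R, P * V = 1 ∧ V * P = 1) ∧
      (∀ i j : Fin n, j < i → P i j = 0) ∧
      (∀ i : Fin n, P i i = 1) ∧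
      (∀ j : Fin n, (P * J) j j = J j j) ∧
      (∀ i j : Fin n, i < j → degD ((P * J) i j) < degD (J j j)) :=
  stmt1_general degD hdivision J hJut hJdiag
end

section
/- Let A ∈ R^{n×n} have full left row rank. Then there exist a unimodular matrix U ∈ R^{n×n} and a matrix H ∈ R^{n×n} in Hermite form such that U·A = H. -/
/-!
Row reduction with Euclid's algorithm. Left multiplication by the transvections `1 + c E_ij`
performs Euclid's algorithm on two entries of a column, which clears every column below its
pivot and makes `U * A` upper triangular. Subtracting left multiples of row `j` from the rows
above it then reduces column `j` modulo the diagonal entry, without disturbing the earlier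
columns. The diagonal of the triangular form is nonzero: the division algorithm makes every
left ideal principal, so `R` is left Noetherian and has the strong rank condition, and a zero
at position `k` would give `n - k` left independent rows supported on `n - k - 1` columns.
-/

open Matrix

theorem isPrincipalIdealRing_of_exists_div {R α : Type*} [Ring R] [LT α] [WellFoundedLT α]
    (deg : R → α)
    (hdiv : ∀ f g : R, g ≠ 0 → ∃ q r : R, f = q * g + r ∧ deg r < deg g) :
    IsPrincipalIdealRing R := by
  refine ⟨fun I => ?_⟩
  by_cases hI : I = ⊥
  · rw [hI]; infer_instance
  obtain ⟨x, hxI, hx0⟩ := (Submodule.ne_bot_iff I).1 hI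
  obtain ⟨g, ⟨hgI, hg0⟩, hmin⟩ :=
    (InvImage.wf deg wellFounded_lt).has_min {x | x ∈ I ∧ x ≠ 0} ⟨x, hxI, hx0⟩
  refine ⟨g, le_antisymm (fun f hf => ?_) ((Ideal.span_singleton_le_iff_mem I).2 hgI)⟩
  obtain ⟨q, r, rfl, hr⟩ := hdiv f g hg0
  have hrI : r ∈ I := by simpa using I.sub_mem hf (I.mul_mem_left q hgI)
  obtain rfl : r = 0 := by_contra fun hr0 => hmin r ⟨hrI, hr0⟩ hr
  exact Ideal.mem_span_singleton'.2 ⟨q, by simp⟩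

namespace Matrix

variable {R α : Type*} [Ring R] [LT α]

section actingOn

variable {ι : Type*} [Fintype ι] [DecidableEq ι]

/-- Left multiplication by a matrix in `actingOn S` replaces the rows indexed by `S` by left
linear combinations of these rows and keeps the other rows. -/
def actingOn (S : Set ι) : Submonoid (Matrix ι ι R) where
  carrier := {U | ∀ i j, (i ∉ S ∨ j ∉ S) → U i j = (1 : Matrix ι ι R) i j}
  one_mem' _ _ _ := rfl
  mul_mem' {U V} hU hV i j hij := by
    rcases hij with hi | hj
    · calc (U * V) i j = ((1 : Matrix ι ι R) * V) i j := by
            simp only [mul_apply, hU i _ (.inl hi)]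
        _ = _ := by rw [one_mul, hV i j (.inl hi)]
    · calc (U * V) i j = (U * (1 : Matrix ι ι R)) i j := by
            simp only [mul_apply, hV _ j (.inr hj)]
        _ = _ := by rw [mul_one, hU i j (.inr hj)]

theorem actingOn_mono {S T : Set ι} (h : S ⊆ T) :
    actingOn S ≤ (actingOn T : Submonoid (Matrix ι ι R)) :=
  fun _ hU i j hij => hU i j (hij.imp (mt (h ·)) (mt (h ·)))

theorem mulVec_apply_of_mem_actingOn {S : Set ι} {U : Matrix ι ι R} (hU : U ∈ actingOn S)
    {i : ι} (hi : i ∉ S) (v : ι → R) : (U *ᵥ v) i = v i := by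
  calc (U *ᵥ v) i = ((1 : Matrix ι ι R) *ᵥ v) i := by
        simp only [mulVec, dotProduct, hU i _ (.inl hi)]
    _ = v i := by rw [one_mulVec]

theorem mulVec_eq_self_of_mem_actingOn {S : Set ι} {U : Matrix ι ι R} (hU : U ∈ actingOn S)
    {v : ι → R} (hv : ∀ i ∈ S, v i = 0) : U *ᵥ v = v := by
  conv_rhs => rw [← one_mulVec v]
  ext i
  refine Finset.sum_congr rfl fun j _ => ?_
  by_cases hj : j ∈ S
  · simp [hv j hj]
  · simp only [hU i j (.inr hj)]

theorem isUnit_one_add_single {i j : ι} (hij : i ≠ j) (c : R) :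
    IsUnit (1 + single i j c) :=
  IsNilpotent.isUnit_one_add
    ⟨2, by rw [pow_two]; exact single_mul_single_of_ne _ _ _ _ hij.symm _⟩

theorem one_add_single_mem_actingOn {S : Set ι} {i j : ι} (hi : i ∈ S) (hj : j ∈ S) (c : R) :
    1 + single i j c ∈ actingOn S := by
  intro a b hab
  have : ¬(i = a ∧ j = b) := by rintro ⟨rfl, rfl⟩; tauto
  simp [single, this]

theorem one_add_single_mulVec (i j : ι) (c : R) (v : ι → R) :
    (1 + single i j c) *ᵥ v = Function.update v i (v i + c * v j) := by
  ext k
  rcases eq_or_ne k i with rfl | hk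
  · simp [add_mulVec, single_mulVec]
  · simp [add_mulVec, single_mulVec, hk]

theorem exists_isUnit_mem_actingOn_pair_mulVec_eq_zero [WellFoundedLT α] (deg : R → α)
    (hdiv : ∀ f g : R, g ≠ 0 → ∃ q r : R, f = q * g + r ∧ deg r < deg g)
    (v : ι → R) {i j : ι} (hij : i ≠ j) :
    ∃ U : Matrix ι ι R, IsUnit U ∧ U ∈ actingOn {i, j} ∧ (U *ᵥ v) j = 0 := by
  induction hd : deg (v j) using WellFoundedLT.induction generalizing v i j with
  | ind d ih =>
  by_cases hvj : v j = 0
  · exact ⟨1, isUnit_one, one_mem _, by simp [hvj]⟩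
  obtain ⟨q, r, hqr, hr⟩ := hdiv (v i) (v j) hvj
  set w := (1 + single i j (-q)) *ᵥ v with hw
  have hwi : w i = r := by simp [hw, one_add_single_mulVec, hqr]
  have hwj : w j = v j := by simp [hw, one_add_single_mulVec, hij.symm]
  obtain ⟨U, hU, hUS, hUw⟩ := ih _ (hd ▸ hwi ▸ hr) w hij.symm rfl
  -- `U *ᵥ w` vanishes at `i`; two more transvections move its `j`-entry to position `i`.
  refine ⟨(1 + single j i (-1)) * (1 + single i j 1) * U * (1 + single i j (-q)),
    (((isUnit_one_add_single hij.symm _).mul (isUnit_one_add_single hij _)).mul hU).mul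
      (isUnit_one_add_single hij _), ?_, ?_⟩
  · refine mul_mem (mul_mem (mul_mem ?_ ?_) (Set.pair_comm i j ▸ hUS)) ?_ <;>
      exact one_add_single_mem_actingOn (by simp) (by simp) _
  · simp only [← mulVec_mulVec, ← hw, one_add_single_mulVec]
    simp [hUw, hij.symm]

theorem exists_isUnit_mem_actingOn_mulVec_eq_zero [WellFoundedLT α] (deg : R → α)
    (hdiv : ∀ f g : R, g ≠ 0 → ∃ q r : R, f = q * g + r ∧ deg r < deg g)
    (v : ι → R) {S : Set ι} {p : ι} (hp : p ∈ S) :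
    ∃ U : Matrix ι ι R, IsUnit U ∧ U ∈ actingOn S ∧
      ∀ i ∈ S, i ≠ p → (U *ᵥ v) i = 0 := by
  suffices ∀ T : Finset ι, ∃ U : Matrix ι ι R, IsUnit U ∧ U ∈ actingOn S ∧
      ∀ i ∈ T, i ∈ S → i ≠ p → (U *ᵥ v) i = 0 by
    obtain ⟨U, hU, hUS, hUv⟩ := this Finset.univ
    exact ⟨U, hU, hUS, fun i => hUv i (Finset.mem_univ i)⟩
  intro T
  induction T using Finset.induction_on with
  | empty => exact ⟨1, isUnit_one, one_mem _, by simp⟩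
  | insert a T _ ih =>
    obtain ⟨U, hU, hUS, hUv⟩ := ih
    by_cases ha : a ∈ S ∧ a ≠ p
    · obtain ⟨U', hU', hU'S, hU'v⟩ :=
        exists_isUnit_mem_actingOn_pair_mulVec_eq_zero deg hdiv (U *ᵥ v) ha.2.symm
      refine ⟨U' * U, hU'.mul hU, mul_mem (actingOn_mono ?_ hU'S) hUS, ?_⟩
      · simp [Set.insert_subset_iff, hp, ha.1]
      intro i hi hiS hip
      rw [← mulVec_mulVec]
      rcases eq_or_ne i a with rfl | hia
      · exact hU'v
      · rw [mulVec_apply_of_mem_actingOn hU'S (by simp [hip, hia])]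
        exact hUv i ((Finset.mem_insert.1 hi).resolve_left hia) hiS hip
    · refine ⟨U, hU, hUS, fun i hi hiS hip => ?_⟩
      rcases Finset.mem_insert.1 hi with rfl | hiT
      · exact absurd ⟨hiS, hip⟩ ha
      · exact hUv i hiT hiS hip

end actingOn

theorem exists_isUnit_blockTriangular_mul [WellFoundedLT α] {n : ℕ} (deg : R → α)
    (hdiv : ∀ f g : R, g ≠ 0 → ∃ q r : R, f = q * g + r ∧ deg r < deg g)
    (A : Matrix (Fin n) (Fin n) R) :
    ∃ U : Matrix (Fin n) (Fin n) R, IsUnit U ∧ (U * A).BlockTriangular id := by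
  suffices ∀ k ≤ n, ∃ U : Matrix (Fin n) (Fin n) R, IsUnit U ∧
      ∀ i j : Fin n, j < i → (j : ℕ) < k → (U * A) i j = 0 by
    obtain ⟨U, hU, hUA⟩ := this n le_rfl
    exact ⟨U, hU, fun i j hji => hUA i j hji j.2⟩
  intro k hk
  induction k with
  | zero => exact ⟨1, isUnit_one, fun _ _ _ h => absurd h (Nat.not_lt_zero _)⟩
  | succ k ih =>
    obtain ⟨U, hU, hUA⟩ := ih (by omega)
    set c : Fin n := ⟨k, hk⟩
    obtain ⟨U', hU', hU'S, hU'c⟩ := exists_isUnit_mem_actingOn_mulVec_eq_zero deg hdiv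
      (fun m => (U * A) m c) (Set.mem_Ici.2 le_rfl : c ∈ Set.Ici c)
    refine ⟨U' * U, hU'.mul hU, fun i j hji hjk => ?_⟩
    rw [mul_assoc]
    change (U' *ᵥ fun m => (U * A) m j) i = 0
    rcases (Nat.lt_succ_iff.1 hjk).lt_or_eq with hjk | hjk
    · have hjc : j < c := hjk
      rw [mulVec_eq_self_of_mem_actingOn hU'S fun m hm => hUA m j (hjc.trans_le hm) hjk]
      exact hUA i j hji hjk
    · obtain rfl : j = c := Fin.ext hjk
      exact hU'c i hji.le hji.ne'

section LinearOrder

variable {κ : Type*} [Fintype κ] [LinearOrder κ]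

theorem BlockTriangular.apply_self_ne_zero [StrongRankCondition R] {T : Matrix κ κ R}
    (hT : T.BlockTriangular id) (hrank : ∀ b : κ → R, b ᵥ* T = 0 → b = 0) (k : κ) :
    T k k ≠ 0 := by
  intro hkk
  -- The rows from `k` on would be left independent vectors supported on the columns after `k`.
  let W : Matrix {i // k ≤ i} {j // k < j} R := T.submatrix Subtype.val Subtype.val
  have hW : ∀ b' : {i // k ≤ i} → R, b' ᵥ* W = 0 → b' = 0 := by
    intro b' hb'
    let b : κ → R := fun i => if h : k ≤ i then b' ⟨i, h⟩ else 0
    have hb : b ᵥ* T = 0 := by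
      ext j
      have hout : ∑ i : {i // ¬k ≤ i}, b i * T i j = 0 :=
        Finset.sum_eq_zero fun i _ => by simp [b, i.2]
      have hin : ∑ i : {i // k ≤ i}, b i * T i j = ∑ i, b' i * T i j :=
        Finset.sum_congr rfl fun i _ => by simp only [b, dif_pos i.2]
      rw [vecMul, dotProduct, ← Fintype.sum_subtype_add_sum_subtype (k ≤ ·), hout, add_zero,
        hin]
      by_cases hkj : k < j
      · exact congrFun hb' ⟨j, hkj⟩
      refine Finset.sum_eq_zero fun i _ => ?_
      rcases (le_trans (not_lt.1 hkj) i.2).lt_or_eq with hji | hji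
      · rw [hT hji, mul_zero]
      · obtain rfl : j = k := le_antisymm (not_lt.1 hkj) (hji ▸ i.2)
        rw [← hji, hkk, mul_zero]
    funext i
    simpa [b, i.2] using congrFun (hrank b hb) i
  refine (card_le_of_injective R W.vecMulLinear ((injective_iff_map_eq_zero _).2 hW)).not_gt ?_
  refine Fintype.card_lt_of_injective_not_surjective (fun j => ⟨j.1, j.2.le⟩)
    (fun _ _ h => Subtype.ext (Subtype.mk.inj h)) fun h => ?_
  obtain ⟨j, hj⟩ := h ⟨k, le_rfl⟩
  exact (congrArg Subtype.val hj ▸ j.2).false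

theorem exists_isUnit_mul_reduce_column (deg : R → α)
    (hdiv : ∀ f g : R, g ≠ 0 → ∃ q r : R, f = q * g + r ∧ deg r < deg g)
    {M : Matrix κ κ R} (hM : M.BlockTriangular id) {c : κ} (hc : M c c ≠ 0) :
    ∃ E : Matrix κ κ R, IsUnit E ∧ (∀ i j, c ≤ i ∨ j < c → (E * M) i j = M i j) ∧
      ∀ i < c, deg ((E * M) i c) < deg (M c c) := by
  choose q r hqr hr using fun i => hdiv (M i c) (M c c) hc
  -- Subtract `q i` times row `c` from each row `i` above it, all at once.
  let w : κ → R := fun i => if i < c then -q i else 0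
  have hEM : ∀ i j, ((1 + vecMulVec w (Pi.single c 1)) * M) i j = M i j + w i * M c j := by
    intro i j
    rw [add_mul, one_mul, vecMulVec_mul, single_one_vecMul]
    rfl
  refine ⟨1 + vecMulVec w (Pi.single c 1), IsNilpotent.isUnit_one_add ⟨2, ?_⟩, ?_, ?_⟩
  · rw [pow_two, vecMulVec_mul_vecMulVec, single_one_dotProduct]
    simp [w]
  · intro i j hij
    rw [hEM]
    rcases hij with hci | hjc
    · simp [w, not_lt.2 hci]
    · simp [hM hjc]
  · intro i hic
    rw [hEM, show M i c + w i * M c c = r i by simp [w, hic, hqr i]]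
    exact hr i

end LinearOrder

theorem exists_isUnit_mul_reduced {n : ℕ} (deg : R → α)
    (hdiv : ∀ f g : R, g ≠ 0 → ∃ q r : R, f = q * g + r ∧ deg r < deg g)
    {T : Matrix (Fin n) (Fin n) R} (hT : T.BlockTriangular id) (hdiag : ∀ i, T i i ≠ 0) :
    ∃ U : Matrix (Fin n) (Fin n) R, IsUnit U ∧ (U * T).BlockTriangular id ∧
      (∀ i, (U * T) i i = T i i) ∧
      ∀ i j, i < j → deg ((U * T) i j) < deg ((U * T) j j) := by
  suffices ∀ k ≤ n, ∃ U : Matrix (Fin n) (Fin n) R, IsUnit U ∧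
      (U * T).BlockTriangular id ∧ (∀ i, (U * T) i i = T i i) ∧
      ∀ i j : Fin n, i < j → (j : ℕ) < k → deg ((U * T) i j) < deg ((U * T) j j) by
    obtain ⟨U, hU, hUT, hUdiag, hUdeg⟩ := this n le_rfl
    exact ⟨U, hU, hUT, hUdiag, fun i j hij => hUdeg i j hij j.2⟩
  intro k hk
  induction k with
  | zero =>
    exact ⟨1, isUnit_one, by simpa using hT, by simp,
      fun _ _ _ h => absurd h (Nat.not_lt_zero _)⟩
  | succ k ih =>
    obtain ⟨U, hU, hUT, hUdiag, hUdeg⟩ := ih (by omega)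
    set c : Fin n := ⟨k, hk⟩
    obtain ⟨E, hE, hEM, hEc⟩ :=
      exists_isUnit_mul_reduce_column deg hdiv hUT (c := c) (by rw [hUdiag]; exact hdiag c)
    have hdiag' : ∀ i, (E * (U * T)) i i = (U * T) i i := fun i => hEM i i (le_or_gt c i)
    refine ⟨E * U, hE.mul hU, fun i j hji => ?_, fun i => ?_, fun i j hij hjk => ?_⟩ <;>
      rw [mul_assoc]
    · rw [hEM i j ((le_or_gt c i).imp_right hji.trans), hUT hji]
    · rw [hdiag', hUdiag]
    · rw [hdiag']
      rcases (Nat.lt_succ_iff.1 hjk).lt_or_eq with hjk | hjk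
      · rw [hEM i j (.inr hjk)]
        exact hUdeg i j hij hjk
      · obtain rfl : j = c := Fin.ext hjk
        exact hEc i hij

end Matrix

theorem stmt2_general
    {R : Type*} [Ring R] [Nontrivial R]
    (degD : R → WithBot ℕ)
    (hdivision : ∀ f g : R, g ≠ 0 → ∃ q rem : R, f = q * g + rem ∧ degD rem < degD g)
    {n : ℕ} (A : Matrix (Fin n) (Fin n) R)
    (hrank : ∀ b : Fin n → R, Matrix.vecMul b A = 0 → b = 0) :
    ∃ U H : Matrix (Fin n) (Fin n) R,
      (∃ V : Matrix (Fin n) (Fin n) R, U * V = 1 ∧ V * U = 1) ∧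
      (∀ i j : Fin n, j < i → H i j = 0) ∧
      (∀ i : Fin n, H i i ≠ 0) ∧
      (∀ i j : Fin n, i < j → degD (H i j) < degD (H j j)) ∧
      U * A = H := by
  have := isPrincipalIdealRing_of_exists_div degD hdivision
  obtain ⟨U₁, hU₁, hT⟩ := exists_isUnit_blockTriangular_mul degD hdivision A
  have hrankT : ∀ b, b ᵥ* (U₁ * A) = 0 → b = 0 := by
    obtain ⟨V, hUV, -⟩ := isUnit_iff_exists.1 hU₁
    intro b hb
    simpa [vecMul_vecMul, hUV] using
      congrArg (· ᵥ* V) (hrank _ ((vecMul_vecMul b U₁ A).trans hb))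
  have hdiag := hT.apply_self_ne_zero hrankT
  obtain ⟨U₂, hU₂, hH, hHdiag, hdeg⟩ := exists_isUnit_mul_reduced degD hdivision hT hdiag
  exact ⟨U₂ * U₁, U₂ * (U₁ * A), isUnit_iff_exists.1 (hU₂.mul hU₁),
    fun i j => @hH i j, fun i => hHdiag i ▸ hdiag i, hdeg, mul_assoc _ _ _⟩

/-- Every full left-row-rank matrix `A ∈ R^{n×n}` admits a
Hermite form: there exist a unimodular `U` and a matrix `H` in Hermite form
(upper triangular, nonzero diagonal, entries above each diagonal entry of
strictly smaller degree) with `U * A = H`. -/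
theorem stmt2
    {R : Type*} [Ring R] [Nontrivial R] [NoZeroDivisors R]
    (degD : R → WithBot ℕ)
    (hbot : ∀ r : R, degD r = ⊥ ↔ r = 0)
    (hmul : ∀ r s : R, degD (r * s) = degD r + degD s)
    (hadd : ∀ r s : R, degD (r + s) ≤ max (degD r) (degD s))
    (hunit : ∀ r : R, degD r = 0 → IsUnit r)
    (hdivision : ∀ f g : R, g ≠ 0 → ∃ q rem : R, f = q * g + rem ∧ degD rem < degD g)
    {n : ℕ} (A : Matrix (Fin n) (Fin n) R)
    (hrank : ∀ b : Fin n → R, Matrix.vecMul b A = 0 → b = 0) :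
    ∃ U H : Matrix (Fin n) (Fin n) R,
      (∃ V : Matrix (Fin n) (Fin n) R, U * V = 1 ∧ V * U = 1) ∧
      (∀ i j : Fin n, j < i → H i j = 0) ∧
      (∀ i : Fin n, H i i ≠ 0) ∧
      (∀ i j : Fin n, i < j → degD (H i j) < degD (H j j)) ∧
      U * A = H :=
  stmt2_general degD hdivision A hrank
end

section
/- Let A ∈ R^{n×n} have full left row rank. Suppose U₁·A = H₁ and U₂·A = H₂ where U₁, U₂ ∈ R^{n×n} are unimodular and H₁, H₂ ∈ R^{n×n} are in Hermite form. Then there exists a diagonal matrix D ∈ R^{n×n} whose diagonal entries are units of R of degree 0, such that H₂ = D·H₁ and U₂ = D·U₁. In particular the Hermite form is unique up to left multiplication by a diagonal matrix of units, and degD (H₁)_{ii} = degD (H₂)_{ii} for all i. -/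
/-!
The transition matrix `W = U₂ U₁⁻¹` satisfies `W H₁ = H₂` and `W⁻¹ H₂ = H₁`. Reading these
identities below the diagonal, column by column, shows that `W` and `W⁻¹` are upper triangular
(the diagonals of `H₁, H₂` are nonzero and `R` has no zero divisors), so the diagonal entries of
`W` are units, hence of degree `0`. Above the diagonal, once the entries of row `i` strictly
between `i` and `j` are known to vanish, `W i j * H₁ j j = H₂ i j - W i i * H₁ i j`; the degree
bounds of both Hermite forms make the right side of degree `< degD (H₁ j j)`, forcing `W i j = 0`.
-/

structure IsDegreeFunction {R : Type*} [Ring R] (degD : R → WithBot ℕ) : Prop where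
  eq_bot_iff : ∀ r, degD r = ⊥ ↔ r = 0
  map_mul : ∀ r s, degD (r * s) = degD r + degD s
  map_add_le : ∀ r s, degD (r + s) ≤ max (degD r) (degD s)

namespace IsDegreeFunction

variable {R : Type*} [Ring R] {degD : R → WithBot ℕ}

theorem exists_eq_coe (hd : IsDegreeFunction degD) {r : R} (hr : r ≠ 0) : ∃ d : ℕ, degD r = d :=
  WithBot.ne_bot_iff_exists.1 (fun h => hr ((hd.eq_bot_iff r).1 h)) |>.imp fun _ h => h.symm

theorem le_map_mul_left (hd : IsDegreeFunction degD) {r : R} (s : R) (hr : r ≠ 0) :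
    degD s ≤ degD (r * s) := by
  obtain ⟨d, hrd⟩ := hd.exists_eq_coe hr
  rw [hd.map_mul, hrd]
  exact le_add_of_nonneg_left (WithBot.coe_nonneg.2 d.zero_le)

theorem map_eq_zero_of_isUnit [Nontrivial R] (hd : IsDegreeFunction degD) {u : R}
    (hu : IsUnit u) : degD u = 0 := by
  obtain ⟨v, huv⟩ := hu.exists_right_inv
  obtain ⟨a, ha⟩ := hd.exists_eq_coe (left_ne_zero_of_mul_eq_one huv)
  obtain ⟨b, hb⟩ := hd.exists_eq_coe (right_ne_zero_of_mul_eq_one huv)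
  obtain ⟨c, hc⟩ := hd.exists_eq_coe (one_ne_zero : (1 : R) ≠ 0)
  have h1 : degD 1 = degD 1 + degD 1 := by rw [← hd.map_mul, one_mul]
  have h2 : degD 1 = degD u + degD v := by rw [← hd.map_mul, huv]
  rw [hc] at h1 h2
  rw [ha, hb] at h2
  rw [ha]
  norm_cast at h1 h2 ⊢
  omega

theorem map_neg [Nontrivial R] (hd : IsDegreeFunction degD) (r : R) : degD (-r) = degD r := by
  rw [← neg_one_mul, hd.map_mul, hd.map_eq_zero_of_isUnit isUnit_one.neg, zero_add]

theorem map_sub_lt [Nontrivial R] (hd : IsDegreeFunction degD) {r s : R} {d : WithBot ℕ}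
    (hr : degD r < d) (hs : degD s < d) : degD (r - s) < d := by
  rw [sub_eq_add_neg]
  exact (hd.map_add_le r (-s)).trans_lt (max_lt hr (by rwa [hd.map_neg]))

end IsDegreeFunction

namespace Matrix

variable {ι R : Type*} [Fintype ι] [LinearOrder ι]

theorem IsUpperTriangular.mul_apply_self_s3 [NonUnitalNonAssocSemiring R] {M N : Matrix ι ι R}
    (hM : M.IsUpperTriangular) (hN : N.IsUpperTriangular) (i : ι) :
    (M * N) i i = M i i * N i i := by
  rw [mul_apply]
  refine Finset.sum_eq_single i (fun k _ hki => ?_) (by simp)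
  rcases hki.lt_or_gt with hk | hk
  · rw [hM hk, zero_mul]
  · rw [hN hk, mul_zero]

theorem IsUpperTriangular.isUnit_apply_self [Semiring R] {M N : Matrix ι ι R}
    (hM : M.IsUpperTriangular) (hN : N.IsUpperTriangular) (hMN : M * N = 1) (hNM : N * M = 1)
    (i : ι) : IsUnit (M i i) :=
  isUnit_iff_exists.2 ⟨N i i, by rw [← hM.mul_apply_self_s3 hN, hMN, one_apply_eq],
    by rw [← hN.mul_apply_self_s3 hM, hNM, one_apply_eq]⟩

theorem IsUpperTriangular.of_mul [NonUnitalNonAssocSemiring R] [NoZeroDivisors R]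
    {M H : Matrix ι ι R} (hMH : (M * H).IsUpperTriangular) (hH : H.IsUpperTriangular)
    (hdiag : ∀ i, H i i ≠ 0) : M.IsUpperTriangular := by
  intro i j hji
  induction j using WellFoundedLT.induction with
  | _ j ih =>
    have hsum : (M * H) i j = M i j * H j j := by
      rw [mul_apply]
      refine Finset.sum_eq_single j (fun k _ hkj => ?_) (by simp)
      rcases hkj.lt_or_gt with hk | hk
      · rw [ih k hk (hk.trans hji), zero_mul]
      · rw [hH hk, mul_zero]
    exact (mul_eq_zero.1 (hsum ▸ hMH hji)).resolve_right (hdiag j)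

structure IsHermiteForm [Ring R] (degD : R → WithBot ℕ) (H : Matrix ι ι R) : Prop where
  isUpperTriangular : H.IsUpperTriangular
  diag_ne_zero : ∀ i, H i i ≠ 0
  degD_lt : ∀ ⦃i j⦄, i < j → degD (H i j) < degD (H j j)

theorem IsHermiteForm.isDiag_of_mul_eq [Ring R] [Nontrivial R] {degD : R → WithBot ℕ}
    (hd : IsDegreeFunction degD) {W H₁ H₂ : Matrix ι ι R} (hH₁ : H₁.IsHermiteForm degD)
    (hH₂ : H₂.IsHermiteForm degD) (hW : W.IsUpperTriangular) (hWdeg : ∀ i, degD (W i i) = 0)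
    (hWH : W * H₁ = H₂) : W.IsDiag := by
  have hdiag_deg (j : ι) : degD (H₂ j j) = degD (H₁ j j) := by
    rw [← hWH, hW.mul_apply_self_s3 hH₁.isUpperTriangular, hd.map_mul, hWdeg, zero_add]
  have hupper (i j : ι) (hij : i < j) : W i j = 0 := by
    induction j using WellFoundedLT.induction with
    | _ j ih =>
      have hsplit : H₂ i j = W i i * H₁ i j + W i j * H₁ j j := by
        rw [← hWH, mul_apply]
        refine Finset.sum_eq_add i j hij.ne (fun k _ ⟨hki, hkj⟩ => ?_) (by simp) (by simp)
        rcases hki.lt_or_gt with hk | hik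
        · rw [hW hk, zero_mul]
        rcases hkj.lt_or_gt with hk | hk
        · rw [ih k hk hik, zero_mul]
        · rw [hH₁.isUpperTriangular hk, mul_zero]
      have hlt : degD (W i j * H₁ j j) < degD (H₁ j j) := by
        rw [eq_sub_of_add_eq' hsplit.symm]
        refine hd.map_sub_lt (hdiag_deg j ▸ hH₂.degD_lt hij) ?_
        rw [hd.map_mul, hWdeg, zero_add]
        exact hH₁.degD_lt hij
      by_contra hWij
      exact (hd.le_map_mul_left _ hWij).not_gt hlt
  intro i j hij
  rcases hij.lt_or_gt with hij | hji
  · exact hupper i j hij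
  · exact hW hji

end Matrix

theorem stmt3_general
    {R : Type*} [Ring R] [Nontrivial R] [NoZeroDivisors R]
    (degD : R → WithBot ℕ)
    (hbot : ∀ r : R, degD r = ⊥ ↔ r = 0)
    (hmul : ∀ r s : R, degD (r * s) = degD r + degD s)
    (hadd : ∀ r s : R, degD (r + s) ≤ max (degD r) (degD s))
    {n : ℕ} (A U₁ U₂ H₁ H₂ : Matrix (Fin n) (Fin n) R)
    (hU₁ : ∃ V : Matrix (Fin n) (Fin n) R, U₁ * V = 1 ∧ V * U₁ = 1)
    (hU₂ : ∃ V : Matrix (Fin n) (Fin n) R, U₂ * V = 1 ∧ V * U₂ = 1)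
    (hH₁ut : ∀ i j : Fin n, j < i → H₁ i j = 0)
    (hH₁diag : ∀ i : Fin n, H₁ i i ≠ 0)
    (hH₁deg : ∀ i j : Fin n, i < j → degD (H₁ i j) < degD (H₁ j j))
    (hH₂ut : ∀ i j : Fin n, j < i → H₂ i j = 0)
    (hH₂diag : ∀ i : Fin n, H₂ i i ≠ 0)
    (hH₂deg : ∀ i j : Fin n, i < j → degD (H₂ i j) < degD (H₂ j j))
    (hUA₁ : U₁ * A = H₁) (hUA₂ : U₂ * A = H₂) :
    (∃ D : Matrix (Fin n) (Fin n) R,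
      (∀ i j : Fin n, i ≠ j → D i j = 0) ∧
      (∀ i : Fin n, IsUnit (D i i) ∧ degD (D i i) = 0) ∧
      H₂ = D * H₁ ∧ U₂ = D * U₁) ∧
    (∀ i : Fin n, degD (H₁ i i) = degD (H₂ i i)) := by
  have hd : IsDegreeFunction degD := ⟨hbot, hmul, hadd⟩
  have hH₁ : H₁.IsHermiteForm degD := ⟨fun i j h => hH₁ut i j h, hH₁diag, hH₁deg⟩
  have hH₂ : H₂.IsHermiteForm degD := ⟨fun i j h => hH₂ut i j h, hH₂diag, hH₂deg⟩
  obtain ⟨V₁, hUV₁, hVU₁⟩ := hU₁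
  obtain ⟨V₂, hUV₂, hVU₂⟩ := hU₂
  let u₁ : (Matrix (Fin n) (Fin n) R)ˣ := ⟨U₁, V₁, hUV₁, hVU₁⟩
  let u₂ : (Matrix (Fin n) (Fin n) R)ˣ := ⟨U₂, V₂, hUV₂, hVU₂⟩
  let W := u₂ * u₁⁻¹
  have hWU : (W : Matrix (Fin n) (Fin n) R) * U₁ = U₂ :=
    congrArg Units.val (inv_mul_cancel_right u₂ u₁)
  have hWH : W * H₁ = H₂ := by rw [← hUA₁, ← Matrix.mul_assoc, hWU, hUA₂]
  have hW : (W : Matrix (Fin n) (Fin n) R).IsUpperTriangular :=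
    .of_mul (hWH ▸ hH₂.isUpperTriangular) hH₁.isUpperTriangular hH₁.diag_ne_zero
  have hW' : (↑W⁻¹ : Matrix (Fin n) (Fin n) R).IsUpperTriangular :=
    .of_mul ((W.inv_mul_eq_iff_eq_mul).2 hWH.symm ▸ hH₁.isUpperTriangular)
      hH₂.isUpperTriangular hH₂.diag_ne_zero
  have hWunit (i : Fin n) : IsUnit ((W : Matrix (Fin n) (Fin n) R) i i) :=
    hW.isUnit_apply_self hW' W.mul_inv W.inv_mul i
  have hdeg (i : Fin n) : degD ((W : Matrix (Fin n) (Fin n) R) i i) = 0 :=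
    hd.map_eq_zero_of_isUnit (hWunit i)
  refine ⟨⟨W, hH₁.isDiag_of_mul_eq hd hH₂ hW hdeg hWH, fun i => ⟨hWunit i, hdeg i⟩, hWH.symm,
    hWU.symm⟩, fun i => ?_⟩
  rw [← hWH, hW.mul_apply_self_s3 hH₁.isUpperTriangular, hmul, hdeg, zero_add]

/-- Uniqueness of the Hermite form up to a diagonal matrix
of degree-0 units: if `U₁ * A = H₁` and `U₂ * A = H₂` with `U₁, U₂`
unimodular and `H₁, H₂` in Hermite form, then there is a diagonal matrix `D`
whose diagonal entries are units of degree 0 with `H₂ = D * H₁` and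
`U₂ = D * U₁`; in particular the diagonal degrees agree. -/
theorem stmt3
    {R : Type*} [Ring R] [Nontrivial R] [NoZeroDivisors R]
    (degD : R → WithBot ℕ)
    (hbot : ∀ r : R, degD r = ⊥ ↔ r = 0)
    (hmul : ∀ r s : R, degD (r * s) = degD r + degD s)
    (hadd : ∀ r s : R, degD (r + s) ≤ max (degD r) (degD s))
    (hunit : ∀ r : R, degD r = 0 → IsUnit r)
    (hdivision : ∀ f g : R, g ≠ 0 → ∃ q rem : R, f = q * g + rem ∧ degD rem < degD g)
    {n : ℕ} (A U₁ U₂ H₁ H₂ : Matrix (Fin n) (Fin n) R)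
    (hrank : ∀ b : Fin n → R, Matrix.vecMul b A = 0 → b = 0)
    (hU₁ : ∃ V : Matrix (Fin n) (Fin n) R, U₁ * V = 1 ∧ V * U₁ = 1)
    (hU₂ : ∃ V : Matrix (Fin n) (Fin n) R, U₂ * V = 1 ∧ V * U₂ = 1)
    (hH₁ut : ∀ i j : Fin n, j < i → H₁ i j = 0)
    (hH₁diag : ∀ i : Fin n, H₁ i i ≠ 0)
    (hH₁deg : ∀ i j : Fin n, i < j → degD (H₁ i j) < degD (H₁ j j))
    (hH₂ut : ∀ i j : Fin n, j < i → H₂ i j = 0)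
    (hH₂diag : ∀ i : Fin n, H₂ i i ≠ 0)
    (hH₂deg : ∀ i j : Fin n, i < j → degD (H₂ i j) < degD (H₂ j j))
    (hUA₁ : U₁ * A = H₁) (hUA₂ : U₂ * A = H₂) :
    (∃ D : Matrix (Fin n) (Fin n) R,
      (∀ i j : Fin n, i ≠ j → D i j = 0) ∧
      (∀ i : Fin n, IsUnit (D i i) ∧ degD (D i i) = 0) ∧
      H₂ = D * H₁ ∧ U₂ = D * U₁) ∧
    (∀ i : Fin n, degD (H₁ i i) = degD (H₂ i i)) :=
  stmt3_general degD hbot hmul hadd A U₁ U₂ H₁ H₂ hU₁ hU₂ hH₁ut hH₁diag hH₁deg hH₂ut hH₂diag hH₂deg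
    hUA₁ hUA₂
end

section
/- Let d be a natural number and let A ∈ K^{n×n} be invertible with every entry of degree at most d. Suppose A = T·D·P·V is a Bruhat decomposition, i.e. T ∈ K^{n×n} is upper triangular with all diagonal entries equal to 1, V ∈ K^{n×n} is lower triangular with all diagonal entries equal to 1, P ∈ K^{n×n} is a permutation matrix, and D ∈ K^{n×n} is diagonal with nonzero diagonal entries u_1, …, u_n. Then Σ_{i=1}^n deg u_i ≤ n·d. (The quantity Σ_i deg u_i is the degree of the Dieudonné determinant of A, so this says deg Ddet(A) ≤ n·d.) -/
/-!
The sum `∑ deg uₖ` is invariant under row permutations of `A`. For an adjacent transposition of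
rows `i < j`, conjugating `T` by it gives an upper unitriangular matrix times `1 + c E_{ji}`;
this factor either moves past `diag u` and `P_σ` into `V` (if `σ i < σ j`), or is rewritten by
the `2 × 2` Bruhat identity, which replaces `u_i, u_j` by `-c⁻¹ u_j, c u_i`. Adjacent
transpositions generate all permutations.

So a row whose last entry has maximal degree may be moved to the bottom. The nonzero corner entry
then forces `σ` to fix the last index and equals `u_n`, and its Schur complement inherits the
decomposition with diagonal `u_1, …, u_{n-1}`. As the pivot is maximal in its column, the
ultrametric inequality keeps the entries of the Schur complement of degree `≤ d`, and induction
gives `∑ deg uₖ ≤ (n - 1) d + d`.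
-/

open Finset Matrix

lemma Finset.sum_eq_sum_add_of_eq_off_pair {ι M : Type*} [Fintype ι] [DecidableEq ι]
    [AddCommMonoid M] {f g : ι → M} {i j : ι} (hij : i ≠ j)
    (hfg : ∀ k, k ≠ i → k ≠ j → g k = f k) {e : M} (he : g i + g j = f i + f j + e) :
    ∑ k, g k = ∑ k, f k + e := by
  have hrest : ∑ k ∈ ({i, j} : Finset ι)ᶜ, g k = ∑ k ∈ ({i, j} : Finset ι)ᶜ, f k :=
    sum_congr rfl fun k hk => by
      simp only [mem_compl, mem_insert, mem_singleton, not_or] at hk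
      exact hfg k hk.1 hk.2
  rw [← sum_compl_add_sum {i, j} g, ← sum_compl_add_sum {i, j} f, sum_pair hij, sum_pair hij,
    he, hrest]
  abel

lemma Fin.swap_apply_lt_swap_apply {n : ℕ} {i j a b : Fin n} (hij : (i : ℕ) + 1 = j)
    (hba : b < a) (hb : b ≠ i) : Equiv.swap i j b < Equiv.swap i j a := by
  rw [Fin.lt_def] at hba ⊢
  have := Fin.val_ne_of_ne hb
  simp only [Equiv.swap_apply_def]
  split_ifs <;> subst_vars <;> simp_all <;> omega

lemma Equiv.Perm.exists_castSucc_eq_of_apply_last {n : ℕ} (σ : Equiv.Perm (Fin (n + 1)))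
    (hσ : σ (Fin.last n) = Fin.last n) :
    ∃ τ : Equiv.Perm (Fin n), ∀ k, σ k.castSucc = (τ k).castSucc := by
  set e := finSuccEquivLast.symm.trans (σ.trans finSuccEquivLast)
  refine ⟨Equiv.removeNone e, fun k => ?_⟩
  obtain ⟨m, hm⟩ := Fin.exists_castSucc_eq.2 fun h =>
    Fin.castSucc_ne_last k (σ.injective (h.trans hσ.symm))
  have := Equiv.removeNone_some e (x := k)
    ⟨m, by simp [e, finSuccEquivLast_symm_some, ← hm, finSuccEquivLast_castSucc]⟩
  simp only [e, Equiv.trans_apply, finSuccEquivLast_symm_some, ← hm, finSuccEquivLast_castSucc,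
    Option.some_inj] at this
  rw [← hm, this]

lemma Matrix.mul_diagonal_mul_permMatrix_mul_apply {ι R : Type*} [Fintype ι] [DecidableEq ι]
    [Semiring R] (T V : Matrix ι ι R) (u : ι → R) (σ : Equiv.Perm ι) (p q : ι) :
    (T * diagonal u * σ.permMatrix R * V) p q = ∑ k, T p k * u k * V (σ k) q := by
  rw [Equiv.Perm.permMatrix, PEquiv.mul_toMatrix_toPEquiv, mul_apply, ← Equiv.sum_comp σ]
  simp [mul_diagonal]

section LowerUnitriangular

variable {ι R : Type*} [LinearOrder ι] [Semiring R] {V : Matrix ι ι R} {x y : ι}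

lemma Matrix.BlockTriangular.updateRow_add_smul (hV : V.BlockTriangular OrderDual.toDual)
    (hyx : y < x) (w : R) :
    (V.updateRow x (V x + w • V y)).BlockTriangular OrderDual.toDual := by
  intro a b (hab : a < b)
  rw [updateRow_apply]
  split_ifs with ha
  · subst ha
    simp [hV hab, hV (show OrderDual.toDual b < OrderDual.toDual y from hyx.trans hab)]
  · exact hV hab

lemma Matrix.updateRow_add_smul_apply_self (hV : V.BlockTriangular OrderDual.toDual)
    (hdiag : ∀ i, V i i = 1) (hyx : y < x) (w : R) (a : ι) :
    V.updateRow x (V x + w • V y) a a = 1 := by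
  rw [updateRow_apply]
  split_ifs with ha
  · subst ha
    simp [hdiag, hV (show OrderDual.toDual a < OrderDual.toDual y from hyx)]
  · exact hdiag a

end LowerUnitriangular

structure IsDegreeFunction_s6 {R : Type*} [Ring R] (deg : R → WithBot ℤ) : Prop where
  eq_bot_iff : ∀ a, deg a = ⊥ ↔ a = 0
  add_le : ∀ a b, deg (a + b) ≤ max (deg a) (deg b)
  mul : ∀ a b, deg (a * b) = deg a + deg b

namespace IsDegreeFunction_s6

section Ring

variable {R : Type*} [Ring R] {deg : R → WithBot ℤ}

lemma zero (hdeg : IsDegreeFunction_s6 deg) : deg 0 = ⊥ := (hdeg.eq_bot_iff 0).2 rfl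

lemma ne_bot (hdeg : IsDegreeFunction_s6 deg) {a : R} (ha : a ≠ 0) : deg a ≠ ⊥ :=
  fun h => ha ((hdeg.eq_bot_iff a).1 h)

variable [Nontrivial R]

lemma one (hdeg : IsDegreeFunction_s6 deg) : deg 1 = 0 := by
  have h := hdeg.mul 1 1
  rw [one_mul] at h
  lift deg 1 to ℤ using hdeg.ne_bot one_ne_zero with m
  norm_cast at h ⊢
  omega

lemma neg (hdeg : IsDegreeFunction_s6 deg) (a : R) : deg (-a) = deg a := by
  have h := hdeg.mul (-1) (-1)
  rw [neg_one_mul, neg_neg, hdeg.one] at h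
  lift deg (-1 : R) to ℤ using hdeg.ne_bot (neg_ne_zero.2 one_ne_zero) with m hm
  have hm0 : m = 0 := by norm_cast at h; omega
  rw [← neg_one_mul, hdeg.mul, ← hm, hm0, WithBot.coe_zero, zero_add]

lemma sub_le (hdeg : IsDegreeFunction_s6 deg) (a b : R) : deg (a - b) ≤ max (deg a) (deg b) := by
  simpa only [sub_eq_add_neg, hdeg.neg] using hdeg.add_le a (-b)

end Ring

variable {K : Type*} [DivisionRing K] {deg : K → WithBot ℤ}

lemma add_inv (hdeg : IsDegreeFunction_s6 deg) {a : K} (ha : a ≠ 0) : deg a + deg a⁻¹ = 0 := by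
  rw [← hdeg.mul, mul_inv_cancel₀ ha, hdeg.one]

lemma mul_inv_mul_le (hdeg : IsDegreeFunction_s6 deg) {a x : K} (hx : deg x ≤ deg a) (y : K) :
    deg (x * a⁻¹ * y) ≤ deg y := by
  rcases eq_or_ne a 0 with rfl | ha
  · rw [hdeg.zero, le_bot_iff, hdeg.eq_bot_iff] at hx
    simp [hx, hdeg.zero]
  calc deg (x * a⁻¹ * y) = deg x + deg a⁻¹ + deg y := by rw [hdeg.mul, hdeg.mul]
    _ ≤ deg a + deg a⁻¹ + deg y := by gcongr
    _ = deg y := by rw [hdeg.add_inv ha, zero_add]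

lemma sum_update_update {ι : Type*} [Fintype ι] [DecidableEq ι] (hdeg : IsDegreeFunction_s6 deg)
    (u : ι → K) {i j : ι} (hij : i ≠ j) {c : K} (hc : c ≠ 0) :
    ∑ k, deg (Function.update (Function.update u i (-(c⁻¹ * u j))) j (c * u i) k) =
      ∑ k, deg (u k) := by
  rw [← add_zero (∑ k, deg (u k))]
  refine sum_eq_sum_add_of_eq_off_pair hij (fun k hki hkj => ?_) ?_
  · rw [Function.update_of_ne hkj, Function.update_of_ne hki]
  · rw [Function.update_self, Function.update_of_ne hij, Function.update_self, hdeg.neg,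
      hdeg.mul, hdeg.mul, add_zero]
    calc deg c⁻¹ + deg (u j) + (deg c + deg (u i))
        = (deg c + deg c⁻¹) + (deg (u i) + deg (u j)) := by abel
      _ = deg (u i) + deg (u j) := by rw [hdeg.add_inv hc, zero_add]

end IsDegreeFunction_s6

section Bruhat

variable {K : Type*} [DivisionRing K] {n : ℕ}

structure IsBruhatDecomp (A T : Matrix (Fin n) (Fin n) K) (u : Fin n → K)
    (V : Matrix (Fin n) (Fin n) K) (σ : Equiv.Perm (Fin n)) : Prop where
  blockTriangular_T : T.BlockTriangular id
  diag_T : ∀ i, T i i = 1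
  blockTriangular_V : V.BlockTriangular OrderDual.toDual
  diag_V : ∀ i, V i i = 1
  ne_zero : ∀ k, u k ≠ 0
  eq : A = T * diagonal u * σ.permMatrix K * V

/-- `s` is the degree of the Dieudonné determinant of `A`. -/
def HasBruhatDecompOfDegree (deg : K → WithBot ℤ) (A : Matrix (Fin n) (Fin n) K)
    (s : WithBot ℤ) : Prop :=
  ∃ T u V σ, IsBruhatDecomp A T u V σ ∧ ∑ k, deg (u k) = s

def Matrix.schurComplementLast (A : Matrix (Fin (n + 1)) (Fin (n + 1)) K) :
    Matrix (Fin n) (Fin n) K :=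
  of fun p q => A p.castSucc q.castSucc -
    A p.castSucc (Fin.last n) * (A (Fin.last n) (Fin.last n))⁻¹ * A (Fin.last n) q.castSucc

namespace IsBruhatDecomp

variable {A T V : Matrix (Fin n) (Fin n) K} {u : Fin n → K} {σ : Equiv.Perm (Fin n)}

lemma T_eq_zero (h : IsBruhatDecomp A T u V σ) {i j : Fin n} (hji : j < i) : T i j = 0 :=
  h.blockTriangular_T hji

lemma V_eq_zero (h : IsBruhatDecomp A T u V σ) {i j : Fin n} (hij : i < j) : V i j = 0 :=
  h.blockTriangular_V hij

lemma apply_eq (h : IsBruhatDecomp A T u V σ) (p q : Fin n) :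
    A p q = ∑ k, T p k * u k * V (σ k) q := by
  rw [h.eq, mul_diagonal_mul_permMatrix_mul_apply]

/-- The hypothesis says `B = T (1 + c E_{ji}) diag(u) P_σ V`. -/
lemma of_sub_of_lt {B : Matrix (Fin n) (Fin n) K} {i j : Fin n} {c : K}
    (h : IsBruhatDecomp (of fun p q => B p q - T p j * c * u i * V (σ i) q) T u V σ)
    (hσ : σ i < σ j) :
    IsBruhatDecomp B T u
      (V.updateRow (σ j) (V (σ j) + ((u j)⁻¹ * c * u i) • V (σ i))) σ where
  blockTriangular_T := h.blockTriangular_T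
  diag_T := h.diag_T
  blockTriangular_V := h.blockTriangular_V.updateRow_add_smul hσ _
  diag_V := updateRow_add_smul_apply_self h.blockTriangular_V h.diag_V hσ _
  ne_zero := h.ne_zero
  eq := by
    ext p q
    have hB := h.apply_eq p q
    rw [of_apply, sub_eq_iff_eq_add] at hB
    have hterm : ∀ k, T p k * u k * (V.updateRow (σ j)
        (V (σ j) + ((u j)⁻¹ * c * u i) • V (σ i))) (σ k) q =
        T p k * u k * V (σ k) q + if k = j then T p j * c * u i * V (σ i) q else 0 := by
      intro k
      simp only [updateRow_apply, σ.injective.eq_iff]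
      split_ifs with hk
      · subst hk
        simp only [Pi.add_apply, Pi.smul_apply, smul_eq_mul, mul_add, mul_assoc,
          mul_inv_cancel_left₀ (h.ne_zero k)]
      · rw [add_zero]
    rw [hB, mul_diagonal_mul_permMatrix_mul_apply, sum_congr rfl fun k _ => hterm k,
      sum_add_distrib, sum_ite_eq']
    simp

/-- Rows and columns `i, j` of the `2 × 2` identity
`[[1, 0], [c, 1]] · [[0, 1], [1, 0]] = [[1, c⁻¹], [0, 1]] · diag(-c⁻¹, c) · [[1, 0], [c⁻¹, 1]]`.
-/
lemma of_sub_of_gt {B : Matrix (Fin n) (Fin n) K} {i j : Fin n} {c : K}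
    (h : IsBruhatDecomp (of fun p q => B p q - T p j * c * u i * V (σ i) q) T u V σ)
    (hij : i < j) (hσ : σ j < σ i) (hc : c ≠ 0) :
    IsBruhatDecomp B (T.updateCol j fun p => T p j + T p i * c⁻¹)
      (Function.update (Function.update u i (-(c⁻¹ * u j))) j (c * u i))
      (V.updateRow (σ i) (V (σ i) + ((c * u i)⁻¹ * u j) • V (σ j)))
      (σ * Equiv.swap i j) where
  blockTriangular_T a b (hba : b < a) := by
    rw [updateCol_apply]
    split_ifs with hb
    · subst hb
      rw [h.T_eq_zero hba, h.T_eq_zero (hij.trans hba), zero_mul, add_zero]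
    · exact h.T_eq_zero hba
  diag_T a := by
    rw [updateCol_apply]
    split_ifs with ha
    · subst ha
      rw [h.diag_T, h.T_eq_zero hij, zero_mul, add_zero]
    · exact h.diag_T a
  blockTriangular_V := h.blockTriangular_V.updateRow_add_smul hσ _
  diag_V := updateRow_add_smul_apply_self h.blockTriangular_V h.diag_V hσ _
  ne_zero k := by
    rcases eq_or_ne k j with rfl | hkj
    · simpa using mul_ne_zero hc (h.ne_zero i)
    rw [Function.update_of_ne hkj]
    rcases eq_or_ne k i with rfl | hki
    · simpa using mul_ne_zero (inv_ne_zero hc) (h.ne_zero j)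
    rw [Function.update_of_ne hki]
    exact h.ne_zero k
  eq := by
    ext p q
    have hB := h.apply_eq p q
    rw [of_apply, sub_eq_iff_eq_add] at hB
    rw [hB, mul_diagonal_mul_permMatrix_mul_apply]
    refine (sum_eq_sum_add_of_eq_off_pair hij.ne (fun k hki hkj => ?_) ?_).symm
    · have hσk : σ k ≠ σ i := σ.injective.ne hki
      simp [updateRow_apply, hki, hkj, hσk, Equiv.swap_apply_of_ne_of_ne]
    · have hσij : σ j ≠ σ i := σ.injective.ne hij.ne'
      simp only [updateCol_apply, updateRow_apply, Function.update_self,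
        Function.update_of_ne hij.ne, if_neg hij.ne, Equiv.Perm.mul_apply,
        Equiv.swap_apply_left, Equiv.swap_apply_right, if_neg hσij, if_true,
        Pi.add_apply, Pi.smul_apply, smul_eq_mul]
      simp only [_root_.mul_inv_rev, mul_add, add_mul, mul_neg, neg_mul, mul_assoc,
        mul_inv_cancel_left₀ (h.ne_zero i), inv_mul_cancel_left₀ hc, mul_inv_cancel_left₀ hc]
      abel

/-- Conjugating `T` by the adjacent transposition leaves it upper triangular except for the
entry `T i j`, which moves below the diagonal and is split off as a factor `1 + c E_{ji}`. -/
lemma exists_swap (h : IsBruhatDecomp A T u V σ) {i j : Fin n} (hij : (i : ℕ) + 1 = j) :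
    ∃ T', IsBruhatDecomp (of fun p q => A (Equiv.swap i j p) q -
      T' p j * T i j * u (Equiv.swap i j i) * V (σ (Equiv.swap i j i)) q)
      T' (u ∘ Equiv.swap i j) V (σ * Equiv.swap i j) := by
  set θ := Equiv.swap i j
  have hi : i < j := Fin.lt_def.2 (by omega)
  have hθi : θ i = j := Equiv.swap_apply_left i j
  have hθj : θ j = i := Equiv.swap_apply_right i j
  set T' := (T.submatrix θ θ).updateCol i fun p => T (θ p) j - T (θ p) i * T i j
  have hT' : ∀ p k, T' p k = if k = i then T (θ p) j - T (θ p) i * T i j else T (θ p) (θ k) :=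
    fun p k => updateCol_apply
  have hT'j : ∀ p, T' p j = T (θ p) i := fun p => by rw [hT', if_neg hi.ne', hθj]
  have hcol : ∀ p k, T (θ p) (θ k) = T' p k + if k = i then T' p j * T i j else 0 := by
    intro p k
    rw [hT', hT'j]
    split_ifs with hk
    · rw [hk, hθi, sub_add_cancel]
    · rw [add_zero]
  refine ⟨T', ⟨fun a b (hba : b < a) => ?_, fun a => ?_, h.blockTriangular_V, h.diag_V,
    fun k => h.ne_zero _, ?_⟩⟩
  · rw [hT']
    split_ifs with hb
    · rw [hb] at hba
      rcases eq_or_ne a j with rfl | ha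
      · rw [hθj, h.diag_T, one_mul, sub_self]
      · have hja : j < a := Fin.lt_def.2 (by have := Fin.val_ne_of_ne ha; omega)
        rw [Equiv.swap_apply_of_ne_of_ne hba.ne' ha, h.T_eq_zero hja, h.T_eq_zero hba,
          zero_mul, sub_zero]
    · exact h.T_eq_zero (Fin.swap_apply_lt_swap_apply hij hba hb)
  · rw [hT']
    split_ifs with ha
    · rw [ha, hθi, h.diag_T, h.T_eq_zero hi, zero_mul, sub_zero]
    · exact h.diag_T _
  · ext p q
    rw [of_apply, mul_diagonal_mul_permMatrix_mul_apply, sub_eq_iff_eq_add, h.apply_eq,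
      ← Equiv.sum_comp θ]
    simp only [hcol, add_mul, sum_add_distrib, ite_mul, zero_mul, sum_ite_eq', mem_univ, if_true,
      Function.comp_apply, Equiv.Perm.mul_apply]

lemma hasBruhatDecompOfDegree_of_sub {deg : K → WithBot ℤ} (hdeg : IsDegreeFunction_s6 deg)
    {B : Matrix (Fin n) (Fin n) K} {i j : Fin n} {c : K}
    (h : IsBruhatDecomp (of fun p q => B p q - T p j * c * u i * V (σ i) q) T u V σ)
    (hij : i < j) : HasBruhatDecompOfDegree deg B (∑ k, deg (u k)) := by
  rcases eq_or_ne c 0 with rfl | hc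
  · simp only [mul_zero, zero_mul, sub_zero] at h
    exact ⟨T, u, V, σ, h, rfl⟩
  rcases lt_or_gt_of_ne (σ.injective.ne hij.ne) with hσ | hσ
  · exact ⟨_, _, _, _, h.of_sub_of_lt hσ, rfl⟩
  · exact ⟨_, _, _, _, h.of_sub_of_gt hij hσ hc, hdeg.sum_update_update u hij.ne hc⟩

end IsBruhatDecomp

namespace IsBruhatDecomp

variable {A T V : Matrix (Fin (n + 1)) (Fin (n + 1)) K} {u : Fin (n + 1) → K}
  {σ : Equiv.Perm (Fin (n + 1))}

lemma apply_last_left (h : IsBruhatDecomp A T u V σ) (q : Fin (n + 1)) :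
    A (Fin.last n) q = u (Fin.last n) * V (σ (Fin.last n)) q := by
  rw [h.apply_eq, sum_eq_single (Fin.last n) (fun k _ hk => ?_) (by simp), h.diag_T, one_mul]
  rw [h.T_eq_zero (Fin.lt_last_iff_ne_last.2 hk), zero_mul, zero_mul]

lemma apply_last_right (h : IsBruhatDecomp A T u V σ) (p : Fin (n + 1)) :
    A p (Fin.last n) = T p (σ.symm (Fin.last n)) * u (σ.symm (Fin.last n)) := by
  rw [h.apply_eq, sum_eq_single (σ.symm (Fin.last n)) (fun k _ hk => ?_) (by simp),
    Equiv.apply_symm_apply, h.diag_V, mul_one]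
  rw [h.V_eq_zero (Fin.lt_last_iff_ne_last.2 fun hσk => hk (σ.symm_apply_eq.2 hσk.symm).symm),
    mul_zero]

/-- A nonzero corner entry forces `σ` to fix the last index; eliminating it then removes exactly
the term `k = n` of `∑ₖ T p k * u k * V (σ k) q`. -/
lemma schurComplementLast (h : IsBruhatDecomp A T u V σ)
    (hA : A (Fin.last n) (Fin.last n) ≠ 0) :
    u (Fin.last n) = A (Fin.last n) (Fin.last n) ∧ ∃ τ, IsBruhatDecomp A.schurComplementLast
      (T.submatrix Fin.castSucc Fin.castSucc) (u ∘ Fin.castSucc)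
      (V.submatrix Fin.castSucc Fin.castSucc) τ := by
  have hσ : σ (Fin.last n) = Fin.last n := by
    by_contra hσ
    rw [h.apply_last_left, h.V_eq_zero (Fin.lt_last_iff_ne_last.2 hσ), mul_zero] at hA
    exact hA rfl
  have hσ' : σ.symm (Fin.last n) = Fin.last n := σ.symm_apply_eq.2 hσ.symm
  have hu : u (Fin.last n) = A (Fin.last n) (Fin.last n) := by
    rw [h.apply_last_left, hσ, h.diag_V, mul_one]
  obtain ⟨τ, hτ⟩ := σ.exists_castSucc_eq_of_apply_last hσ
  refine ⟨hu, τ, fun a b (hba : b < a) => h.T_eq_zero (Fin.castSucc_lt_castSucc_iff.2 hba),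
    fun a => h.diag_T _, fun a b (hab : a < b) => h.V_eq_zero (Fin.castSucc_lt_castSucc_iff.2 hab),
    fun a => h.diag_V _, fun k => h.ne_zero _, ?_⟩
  ext p q
  rw [mul_diagonal_mul_permMatrix_mul_apply, Matrix.schurComplementLast, of_apply, ← hu,
    h.apply_eq, Fin.sum_univ_castSucc, h.apply_last_right, h.apply_last_left, hσ, hσ']
  simp only [mul_assoc, inv_mul_cancel_left₀ (h.ne_zero _), add_sub_cancel_right, hτ,
    submatrix_apply, Function.comp_apply]

end IsBruhatDecomp

lemma IsDegreeFunction_s6.schurComplementLast_le {deg : K → WithBot ℤ}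
    (hdeg : IsDegreeFunction_s6 deg) {A : Matrix (Fin (n + 1)) (Fin (n + 1)) K} {c : WithBot ℤ}
    (hc : ∀ p q, deg (A p q) ≤ c)
    (hpivot : ∀ p, deg (A p (Fin.last n)) ≤ deg (A (Fin.last n) (Fin.last n))) (p q : Fin n) :
    deg (A.schurComplementLast p q) ≤ c :=
  (hdeg.sub_le _ _).trans (max_le (hc _ _) ((hdeg.mul_inv_mul_le (hpivot _) _).trans (hc _ _)))

namespace HasBruhatDecompOfDegree

variable {deg : K → WithBot ℤ} {s : WithBot ℤ}

lemma submatrix_swap (hdeg : IsDegreeFunction_s6 deg) {A : Matrix (Fin n) (Fin n) K}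
    (hA : HasBruhatDecompOfDegree deg A s) {i j : Fin n} (hij : (i : ℕ) + 1 = j) :
    HasBruhatDecompOfDegree deg (A.submatrix (Equiv.swap i j) id) s := by
  obtain ⟨T, u, V, σ, h, rfl⟩ := hA
  obtain ⟨T', h'⟩ := h.exists_swap hij
  have := h'.hasBruhatDecompOfDegree_of_sub (u := u ∘ Equiv.swap i j)
    (σ := σ * Equiv.swap i j) hdeg (Fin.lt_def.2 (by omega))
  rwa [Function.comp_def, Equiv.sum_comp (Equiv.swap i j) fun k => deg (u k)] at this

lemma submatrix (hdeg : IsDegreeFunction_s6 deg) {A : Matrix (Fin (n + 1)) (Fin (n + 1)) K}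
    (hA : HasBruhatDecompOfDegree deg A s) (ρ : Equiv.Perm (Fin (n + 1))) :
    HasBruhatDecompOfDegree deg (A.submatrix ρ id) s := by
  have hρ :
      ρ ∈ Submonoid.closure (Set.range fun i : Fin n => Equiv.swap i.castSucc i.succ) := by
    rw [Equiv.Perm.mclosure_swap_castSucc_succ]
    trivial
  induction hρ using Submonoid.closure_induction generalizing A with
  | mem _ hx =>
    obtain ⟨i, rfl⟩ := hx
    exact hA.submatrix_swap hdeg (by simp)
  | one => exact hA
  | mul ρ₁ ρ₂ _ _ h₁ h₂ => exact h₂ (h₁ hA)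

lemma exists_apply_last_ne_zero {A : Matrix (Fin (n + 1)) (Fin (n + 1)) K}
    (hA : HasBruhatDecompOfDegree deg A s) : ∃ p, A p (Fin.last n) ≠ 0 := by
  obtain ⟨T, u, V, σ, h, -⟩ := hA
  exact ⟨σ.symm (Fin.last n), by rw [h.apply_last_right, h.diag_T, one_mul]; exact h.ne_zero _⟩

lemma schurComplementLast {A : Matrix (Fin (n + 1)) (Fin (n + 1)) K}
    (hA : HasBruhatDecompOfDegree deg A s) (hL : A (Fin.last n) (Fin.last n) ≠ 0) :
    ∃ s', HasBruhatDecompOfDegree deg A.schurComplementLast s' ∧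
      s = s' + deg (A (Fin.last n) (Fin.last n)) := by
  obtain ⟨T, u, V, σ, h, rfl⟩ := hA
  obtain ⟨hu, τ, h'⟩ := h.schurComplementLast hL
  exact ⟨_, ⟨_, _, _, _, h', rfl⟩, by rw [Fin.sum_univ_castSucc, hu]; rfl⟩

lemma le_nsmul (hdeg : IsDegreeFunction_s6 deg) {A : Matrix (Fin n) (Fin n) K}
    (hA : HasBruhatDecompOfDegree deg A s) {c : WithBot ℤ} (hc : ∀ p q, deg (A p q) ≤ c) :
    s ≤ n • c := by
  induction n generalizing s with
  | zero =>
    obtain ⟨T, u, V, σ, -, rfl⟩ := hA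
    simp
  | succ n ih =>
    obtain ⟨r, -, hr⟩ := exists_max_image univ (fun p => deg (A p (Fin.last n))) univ_nonempty
    have hpivot : A r (Fin.last n) ≠ 0 := by
      obtain ⟨p, hp⟩ := hA.exists_apply_last_ne_zero
      intro h0
      have := hr p (mem_univ _)
      rw [h0, hdeg.zero, le_bot_iff, hdeg.eq_bot_iff] at this
      exact hp this
    set B := A.submatrix (Equiv.swap r (Fin.last n)) id
    obtain ⟨s', hs', rfl⟩ := (hA.submatrix hdeg (Equiv.swap r (Fin.last n))).schurComplementLast
      (by simpa [B] using hpivot)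
    have hs'c : s' ≤ n • c := ih hs' (hdeg.schurComplementLast_le (fun p q => hc _ _)
      (fun p => by simpa [B] using hr _ (mem_univ _)))
    calc s' + deg (B (Fin.last n) (Fin.last n)) ≤ n • c + c := add_le_add hs'c (hc _ _)
      _ = (n + 1) • c := (succ_nsmul c n).symm

end HasBruhatDecompOfDegree

end Bruhat

theorem stmt6_general
    {K : Type*} [DivisionRing K]
    (deg : K → WithBot ℤ)
    (hbot : ∀ a : K, deg a = ⊥ ↔ a = 0)
    (hadd : ∀ a b : K, deg (a + b) ≤ max (deg a) (deg b))
    (hmul : ∀ a b : K, deg (a * b) = deg a + deg b)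
    {n : ℕ} (d : ℕ) (A T D P V : Matrix (Fin n) (Fin n) K)
    (hAd : ∀ p q : Fin n, deg (A p q) ≤ ((d : ℤ) : WithBot ℤ))
    (hT : ∀ i j : Fin n, j < i → T i j = 0) (hTdiag : ∀ i : Fin n, T i i = 1)
    (hV : ∀ i j : Fin n, i < j → V i j = 0) (hVdiag : ∀ i : Fin n, V i i = 1)
    (hP : ∃ σ : Equiv.Perm (Fin n), ∀ i j : Fin n, P i j = if σ i = j then 1 else 0)
    (hD : ∀ i j : Fin n, i ≠ j → D i j = 0) (hDdiag : ∀ i : Fin n, D i i ≠ 0)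
    (hBruhat : A = T * D * P * V) :
    (∑ i : Fin n, deg (D i i)) ≤ (((n * d : ℕ) : ℤ) : WithBot ℤ) := by
  obtain ⟨σ, hσ⟩ := hP
  have hD' : D = diagonal fun i => D i i := by
    ext i j
    rw [diagonal_apply]
    split_ifs with hij
    · rw [hij]
    · exact hD i j hij
  have hP' : P = σ.permMatrix K := by
    ext i j
    simp [hσ, Equiv.Perm.permMatrix, PEquiv.toMatrix_apply]
  have h : IsBruhatDecomp A T (fun i => D i i) V σ :=
    ⟨fun i j => hT i j, hTdiag, fun i j => hV i j, hVdiag, hDdiag,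
      by rw [hBruhat, ← hP', ← hD']⟩
  simpa [← WithBot.coe_nsmul] using
    HasBruhatDecompOfDegree.le_nsmul ⟨hbot, hadd, hmul⟩ ⟨T, _, V, σ, h, rfl⟩ hAd

/-- Over a division ring `K` with a degree function
`deg : K → WithBot ℤ`: if `A ∈ K^{n×n}` is invertible with all entries of
degree at most `d`, and `A = T * D * P * V` is a Bruhat decomposition
(`T` unit upper triangular, `V` unit lower triangular, `P` a permutation
matrix, `D` diagonal with nonzero diagonal entries), then the degree of the
Dieudonné determinant satisfies `Σ_i deg (D i i) ≤ n·d`. -/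
theorem stmt6
    {K : Type*} [DivisionRing K]
    (deg : K → WithBot ℤ)
    (hbot : ∀ a : K, deg a = ⊥ ↔ a = 0)
    (hadd : ∀ a b : K, deg (a + b) ≤ max (deg a) (deg b))
    (hmul : ∀ a b : K, deg (a * b) = deg a + deg b)
    (hinv : ∀ a : K, a ≠ 0 → deg a⁻¹ = (deg a).map (fun k : ℤ => -k))
    {n : ℕ} (d : ℕ) (A T D P V : Matrix (Fin n) (Fin n) K)
    (hAinv : ∃ B : Matrix (Fin n) (Fin n) K, A * B = 1 ∧ B * A = 1)
    (hAd : ∀ p q : Fin n, deg (A p q) ≤ ((d : ℤ) : WithBot ℤ))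
    (hT : ∀ i j : Fin n, j < i → T i j = 0) (hTdiag : ∀ i : Fin n, T i i = 1)
    (hV : ∀ i j : Fin n, i < j → V i j = 0) (hVdiag : ∀ i : Fin n, V i i = 1)
    (hP : ∃ σ : Equiv.Perm (Fin n), ∀ i j : Fin n, P i j = if σ i = j then 1 else 0)
    (hD : ∀ i j : Fin n, i ≠ j → D i j = 0) (hDdiag : ∀ i : Fin n, D i i ≠ 0)
    (hBruhat : A = T * D * P * V) :
    (∑ i : Fin n, deg (D i i)) ≤ (((n * d : ℕ) : ℤ) : WithBot ℤ) :=
  stmt6_general deg hbot hadd hmul d A T D P V hAd hT hTdiag hV hVdiag hP hD hDdiag hBruhat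
end

section
/- Let H ∈ K^{n×n} be upper triangular and invertible, with every entry of H either zero or of nonnegative degree, and with deg H_{ij} < deg H_{jj} whenever i < j. Let J = H⁻¹ ∈ K^{n×n}. Then deg J_{ij} ≤ 0 for all i, j ∈ {1,…,n}. -/
/-!
Reading row `i` of `H * J = 1` from the diagonal on,
`H i i * J i j = δ i j - ∑_{k > i} H i k * J k j`. By downward induction on `i`,
`deg (H i i) + deg (J i j) ≤ 0`: each term of the sum has degree
`deg (H i k) + deg (J k j) ≤ deg (H k k) + deg (J k j) ≤ 0`, and the degree is ultrametric.
The diagonal entries of `H` are nonzero (`J * H = 1` gives a nonzero entry in column `k`; if it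
is some `H i k` with `i < k`, then `deg (H k k) > deg (H i k) ≥ ⊥`), so they have nonnegative degree and `deg (J i j) ≤ 0`.
-/

theorem WithBot.eq_zero_of_add_self_eq_zero {x : WithBot ℤ} (h : x + x = 0) : x = 0 := by
  induction x with
  | bot => simp at h
  | coe d => norm_cast at h ⊢; omega

structure IsDegree {K : Type*} [Ring K] (deg : K → WithBot ℤ) : Prop where
  eq_bot_iff : ∀ a, deg a = ⊥ ↔ a = 0
  add_le : ∀ a b, deg (a + b) ≤ max (deg a) (deg b)
  mul : ∀ a b, deg (a * b) = deg a + deg b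

namespace IsDegree

variable {K : Type*} [Ring K] {deg : K → WithBot ℤ}

theorem deg_zero (hdeg : IsDegree deg) : deg 0 = ⊥ :=
  (hdeg.eq_bot_iff 0).2 rfl

theorem ne_zero_of_deg_lt (hdeg : IsDegree deg) {a b : K} (h : deg a < deg b) : b ≠ 0 :=
  fun hb => not_lt_bot (((hdeg.eq_bot_iff b).2 hb) ▸ h)

theorem deg_sum_le (hdeg : IsDegree deg) {ι : Type*} (s : Finset ι) (f : ι → K) {c : WithBot ℤ}
    (h : ∀ i ∈ s, deg (f i) ≤ c) : deg (∑ i ∈ s, f i) ≤ c :=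
  Finset.sum_induction f (deg · ≤ c) (fun a b ha hb => (hdeg.add_le a b).trans (max_le ha hb))
    (hdeg.deg_zero ▸ bot_le) h

variable [Nontrivial K]

theorem deg_one (hdeg : IsDegree deg) : deg 1 = 0 := by
  obtain ⟨d, hd⟩ := WithBot.ne_bot_iff_exists.1 (mt (hdeg.eq_bot_iff 1).1 one_ne_zero)
  have h := hdeg.mul 1 1
  rw [one_mul, ← hd] at h
  rw [← hd]
  norm_cast at h ⊢
  omega

theorem deg_neg (hdeg : IsDegree deg) (a : K) : deg (-a) = deg a := by
  have h := hdeg.mul (-1) (-1)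
  rw [neg_one_mul, neg_neg, hdeg.deg_one] at h
  rw [← neg_one_mul, hdeg.mul, WithBot.eq_zero_of_add_self_eq_zero h.symm, zero_add]

theorem deg_sub_le (hdeg : IsDegree deg) (a b : K) : deg (a - b) ≤ max (deg a) (deg b) := by
  simpa only [sub_eq_add_neg, hdeg.deg_neg] using hdeg.add_le a (-b)

end IsDegree

namespace Matrix

theorem exists_ne_zero_of_mul_eq_one {ι K : Type*} [Fintype ι] [DecidableEq ι] [Semiring K]
    [Nontrivial K] {H J : Matrix ι ι K} (hJH : J * H = 1) (j : ι) : ∃ k, H k j ≠ 0 := by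
  by_contra! h
  simpa [mul_apply, h] using congr_fun₂ hJH j j

variable {ι K : Type*} [Fintype ι] [LinearOrder ι] [Ring K] [Nontrivial K] {deg : K → WithBot ℤ}

theorem IsUpperTriangular.diag_ne_zero_of_deg_lt (hdeg : IsDegree deg)
    {H J : Matrix ι ι K} (hH : H.IsUpperTriangular) (hJH : J * H = 1)
    (hlt : ∀ i k, i < k → deg (H i k) < deg (H k k)) (k : ι) : H k k ≠ 0 := by
  obtain ⟨i, hi⟩ := exists_ne_zero_of_mul_eq_one hJH k
  rcases lt_trichotomy i k with hik | rfl | hki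
  · exact hdeg.ne_zero_of_deg_lt (hlt i k hik)
  · exact hi
  · exact absurd (hH hki) hi

theorem IsUpperTriangular.deg_diag_add_deg_right_inv_le (hdeg : IsDegree deg)
    {H J : Matrix ι ι K} (hH : H.IsUpperTriangular) (hHJ : H * J = 1)
    (hle : ∀ i k, i < k → deg (H i k) ≤ deg (H k k)) (i j : ι) :
    deg (H i i) + deg (J i j) ≤ 0 := by
  induction i using WellFoundedGT.induction with
  | _ i ih =>
  have hrow : H i i * J i j = (1 : Matrix ι ι K) i j - ∑ k ∈ Finset.univ.erase i, H i k * J k j := by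
    rw [← hHJ, mul_apply, ← Finset.add_sum_erase _ _ (Finset.mem_univ i), add_sub_cancel_right]
  have hone : deg ((1 : Matrix ι ι K) i j) ≤ 0 := by
    rw [one_apply]
    split_ifs
    · exact hdeg.deg_one.le
    · exact hdeg.deg_zero ▸ bot_le
  have hsum : deg (∑ k ∈ Finset.univ.erase i, H i k * J k j) ≤ 0 := by
    refine hdeg.deg_sum_le _ _ fun k hk => ?_
    rcases lt_or_gt_of_ne (Finset.ne_of_mem_erase hk) with hki | hik
    · rw [hH hki, zero_mul, hdeg.deg_zero]
      exact bot_le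
    · rw [hdeg.mul]
      exact (add_le_add_left (hle i k hik) _).trans (ih k hik)
  rw [← hdeg.mul, hrow]
  exact (hdeg.deg_sub_le _ _).trans (max_le hone hsum)

end Matrix

theorem stmt10_general
    {K : Type*} [DivisionRing K]
    (deg : K → WithBot ℤ)
    (hbot : ∀ a : K, deg a = ⊥ ↔ a = 0)
    (hadd : ∀ a b : K, deg (a + b) ≤ max (deg a) (deg b))
    (hmul : ∀ a b : K, deg (a * b) = deg a + deg b)
    {n : ℕ} (H J : Matrix (Fin n) (Fin n) K)
    (hHut : ∀ i j : Fin n, j < i → H i j = 0)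
    (hHinv : H * J = 1 ∧ J * H = 1)
    (hHpos : ∀ i j : Fin n, H i j = 0 ∨ (0 : WithBot ℤ) ≤ deg (H i j))
    (hHdeg : ∀ i j : Fin n, i < j → deg (H i j) < deg (H j j)) :
    ∀ i j : Fin n, deg (J i j) ≤ (0 : WithBot ℤ) := by
  have hdeg : IsDegree deg := ⟨hbot, hadd, hmul⟩
  have hH : H.IsUpperTriangular := fun i j h => hHut i j h
  intro i j
  have hdiag_pos : 0 ≤ deg (H i i) :=
    (hHpos i i).resolve_left (hH.diag_ne_zero_of_deg_lt hdeg hHinv.2 hHdeg i)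
  exact le_of_add_le_of_nonneg_right
    (hH.deg_diag_add_deg_right_inv_le hdeg hHinv.1 (fun i k h => (hHdeg i k h).le) i j) hdiag_pos

/-- Over a division ring `K` with a degree function
`deg : K → WithBot ℤ`: if `H ∈ K^{n×n}` is upper triangular and invertible,
with every entry zero or of nonnegative degree and `deg H_{ij} < deg H_{jj}`
for `i < j`, then every entry of `J = H⁻¹` has degree at most `0`. -/
theorem stmt10
    {K : Type*} [DivisionRing K]
    (deg : K → WithBot ℤ)
    (hbot : ∀ a : K, deg a = ⊥ ↔ a = 0)
    (hadd : ∀ a b : K, deg (a + b) ≤ max (deg a) (deg b))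
    (hmul : ∀ a b : K, deg (a * b) = deg a + deg b)
    (hinv : ∀ a : K, a ≠ 0 → deg a⁻¹ = (deg a).map (fun k : ℤ => -k))
    {n : ℕ} (H J : Matrix (Fin n) (Fin n) K)
    (hHut : ∀ i j : Fin n, j < i → H i j = 0)
    (hHinv : H * J = 1 ∧ J * H = 1)
    (hHpos : ∀ i j : Fin n, H i j = 0 ∨ (0 : WithBot ℤ) ≤ deg (H i j))
    (hHdeg : ∀ i j : Fin n, i < j → deg (H i j) < deg (H j j)) :
    ∀ i j : Fin n, deg (J i j) ≤ (0 : WithBot ℤ) :=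
  stmt10_general deg hbot hadd hmul H J hHut hHinv hHpos hHdeg
end

section
/- Let A ∈ R^{n×n} have full left row rank, let H = U·A be a Hermite form of A with U unimodular, and set h_i = degD H_{ii} for each i. Let L(A) = { b·A : b ∈ R^{1×n} } be the left row module of A, let ℓ ∈ {1,…,n}, and let v = (v_1,…,v_n) ∈ R^{1×n} satisfy v_k = 0 for all k < ℓ and degD v_ℓ < h_ℓ. Then: if v ∈ L(A), then v_ℓ = 0; equivalently, if v_ℓ ≠ 0 then v ∉ L(A). -/
/-!
Write `v = b·A`. Since `A = V·H` with `V = U⁻¹`, also `v = c·H` for `c = b·V`. As `H` is upper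
triangular with nonzero diagonal and `R` has no zero divisors, the vanishing of `v_k` for `k < ℓ`
forces `c_k = 0` for `k < ℓ`, inductively from `k = 0`. Hence `v_ℓ = c_ℓ·H_ℓℓ`, so
`degD v_ℓ = degD c_ℓ + h_ℓ`, which is `< h_ℓ` only when `degD c_ℓ = −∞`, i.e. `c_ℓ = 0`.
-/

theorem WithBot.eq_bot_of_add_lt_right {a b : WithBot ℕ} (h : a + b < b) : a = ⊥ := by
  induction a with
  | bot => rfl
  | coe m =>
    exact absurd h (not_lt.mpr (le_add_of_nonneg_left (WithBot.coe_nonneg.mpr (Nat.zero_le m))))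

namespace Matrix

variable {ι R : Type*} [Fintype ι] [LinearOrder ι]

theorem vecMul_apply_eq_mul_diag_of_blockTriangular [NonUnitalNonAssocSemiring R]
    {H : Matrix ι ι R} (hH : H.BlockTriangular id) {c : ι → R} {k : ι}
    (hc : ∀ i < k, c i = 0) : vecMul c H k = c k * H k k := by
  refine Finset.sum_eq_single k (fun i _ hik => ?_) (fun hk => absurd (Finset.mem_univ k) hk)
  rcases lt_or_gt_of_ne hik with hlt | hgt
  · rw [hc i hlt, zero_mul]
  · simp only [hH hgt, mul_zero]

theorem vecMul_eq_zero_of_lt_of_blockTriangular [NonUnitalNonAssocSemiring R] [NoZeroDivisors R]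
    {H : Matrix ι ι R} (hH : H.BlockTriangular id) (hdiag : ∀ i, H i i ≠ 0) {c : ι → R}
    {ℓ : ι} (hv : ∀ k < ℓ, vecMul c H k = 0) : ∀ k < ℓ, c k = 0 := by
  intro k
  induction k using WellFoundedLT.induction with
  | _ k ih =>
    intro hkℓ
    have hck : c k * H k k = 0 := by
      rw [← vecMul_apply_eq_mul_diag_of_blockTriangular hH fun i hik => ih i hik (hik.trans hkℓ)]
      exact hv k hkℓ
    exact (mul_eq_zero.mp hck).resolve_right (hdiag k)

end Matrix

theorem stmt12_general
    {R : Type*} [Ring R] [NoZeroDivisors R]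
    (degD : R → WithBot ℕ)
    (hbot : ∀ r : R, degD r = ⊥ ↔ r = 0)
    (hmul : ∀ r s : R, degD (r * s) = degD r + degD s)
    {n : ℕ} (A U H : Matrix (Fin n) (Fin n) R)
    (hUuni : ∃ V : Matrix (Fin n) (Fin n) R, U * V = 1 ∧ V * U = 1)
    (hHut : ∀ i j : Fin n, j < i → H i j = 0)
    (hHdiag : ∀ i : Fin n, H i i ≠ 0)
    (hUA : U * A = H)
    (ℓ : Fin n) (v : Fin n → R)
    (hv0 : ∀ k : Fin n, k < ℓ → v k = 0)
    (hvdeg : degD (v ℓ) < degD (H ℓ ℓ)) :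
    (∃ b : Fin n → R, v = Matrix.vecMul b A) → v ℓ = 0 := by
  rintro ⟨b, rfl⟩
  obtain ⟨V, -, hVU⟩ := hUuni
  have hH : H.BlockTriangular id := fun i j => hHut i j
  have hbc : Matrix.vecMul b A = Matrix.vecMul (Matrix.vecMul b V) H := by
    rw [Matrix.vecMul_vecMul, ← hUA, ← Matrix.mul_assoc, hVU, Matrix.one_mul]
  rw [hbc] at hv0 hvdeg ⊢
  have hc := Matrix.vecMul_eq_zero_of_lt_of_blockTriangular hH hHdiag hv0
  rw [Matrix.vecMul_apply_eq_mul_diag_of_blockTriangular hH hc] at hvdeg ⊢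
  rw [hmul] at hvdeg
  rw [(hbot _).mp (WithBot.eq_bot_of_add_lt_right hvdeg), zero_mul]

/-- Let `A ∈ R^{n×n}` have full left row rank with
Hermite form `H = U·A` (`U` unimodular), and let `h_ℓ = degD H_{ℓℓ}`.
If `v ∈ R^{1×n}` has `v_k = 0` for all `k < ℓ` and `degD v_ℓ < h_ℓ`, then
membership of `v` in the left row module `L(A) = { b·A : b ∈ R^{1×n} }`
forces `v_ℓ = 0`. -/
theorem stmt12
    {R : Type*} [Ring R] [Nontrivial R] [NoZeroDivisors R]
    (degD : R → WithBot ℕ)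
    (hbot : ∀ r : R, degD r = ⊥ ↔ r = 0)
    (hmul : ∀ r s : R, degD (r * s) = degD r + degD s)
    (hadd : ∀ r s : R, degD (r + s) ≤ max (degD r) (degD s))
    (hunit : ∀ r : R, degD r = 0 → IsUnit r)
    (hdivision : ∀ f g : R, g ≠ 0 → ∃ q rem : R, f = q * g + rem ∧ degD rem < degD g)
    {n : ℕ} (A U H : Matrix (Fin n) (Fin n) R)
    (hrank : ∀ b : Fin n → R, Matrix.vecMul b A = 0 → b = 0)
    (hUuni : ∃ V : Matrix (Fin n) (Fin n) R, U * V = 1 ∧ V * U = 1)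
    (hHut : ∀ i j : Fin n, j < i → H i j = 0)
    (hHdiag : ∀ i : Fin n, H i i ≠ 0)
    (hHdeg : ∀ i j : Fin n, i < j → degD (H i j) < degD (H j j))
    (hUA : U * A = H)
    (ℓ : Fin n) (v : Fin n → R)
    (hv0 : ∀ k : Fin n, k < ℓ → v k = 0)
    (hvdeg : degD (v ℓ) < degD (H ℓ ℓ)) :
    (∃ b : Fin n → R, v = Matrix.vecMul b A) → v ℓ = 0 :=
  stmt12_general degD hbot hmul A U H hUuni hHut hHdiag hUA ℓ v hv0 hvdeg
end

section
/- Suppose d_i ≥ h_i for all i ∈ {1,…,n}, and suppose R contains an element ∂ with degD ∂ = 1. Then there exists a solution T ∈ R^{n×n} for (d_1,…,d_n); moreover T can be chosen so that degD T_{ij} ≤ (n−1)·d + max_i (d_i − h_i) for all i, j. -/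
/-!
Write `V = U⁻¹`, so `V * H = A`. Since `H` is upper triangular and each diagonal entry
dominates its column in degree, solving `V * H = A` column by column gives `deg V ≤ d`.
The elements of degree `≤ 0` form a skew field `F`, over which the elements of degree `≤ k`
form a space of dimension `k + 1` with basis `1, ∂, …, ∂ᵏ`. Rank–nullity for `s ↦ s * V`,
restricted to the coordinates other than `i`, then bounds the degree of the `i`-th row of `U`
by `(n - 1) * d`.

Multiplying row `j` of `H` by `∂ ^ (dⱼ - hⱼ)` gives an upper triangular `G` with diagonal
degrees `dⱼ`. Reducing each row of `G` modulo the rows below it, by right division by their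
diagonal entries from left to right, gives a unit upper triangular `C` such that `C * G` solves
the degree constraints, and `T = C * diag(∂ ^ (dⱼ - hⱼ)) * U` satisfies `T * A = C * G`.
-/

open Finset Matrix

theorem Matrix.eq_smul_row_of_vecMul_apply_eq_zero {R n : Type*} [Semiring R] [Fintype n]
    [DecidableEq n] {U V : Matrix n n R} (hVU : V * U = 1) {s : n → R} {i : n}
    (hs : ∀ j, j ≠ i → vecMul s V j = 0) : s = vecMul s V i • U i := by
  have hsV : vecMul s V = Pi.single i (vecMul s V i) := by
    funext j
    by_cases hj : j = i
    · subst hj; simp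
    · simp [hj, hs j hj]
  calc s = vecMul (vecMul s V) U := by rw [vecMul_vecMul, hVU, vecMul_one]
    _ = vecMul s V i • U i := by rw [hsV, single_vecMul, Pi.single_eq_same]; rfl

theorem Matrix.BlockTriangular.vecMul_apply_eq_zero {R n : Type*} [Semiring R] [Fintype n]
    [LinearOrder n] {G : Matrix n n R} (hG : G.BlockTriangular id) {c : n → R} {k : n}
    (hc : ∀ j, j ≤ k → c j = 0) : vecMul c G k = 0 :=
  sum_eq_zero fun j _ => by
    rcases le_or_gt j k with hjk | hjk
    · exact mul_eq_zero_of_left (hc j hjk) _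
    · exact mul_eq_zero_of_right _ (hG hjk)

structure IsDegreeFunction_s13 {R : Type*} [Ring R] (deg : R → WithBot ℕ) : Prop where
  eq_bot_iff : ∀ r, deg r = ⊥ ↔ r = 0
  map_mul : ∀ r s, deg (r * s) = deg r + deg s
  map_add_le : ∀ r s, deg (r + s) ≤ max (deg r) (deg s)

namespace IsDegreeFunction_s13

variable {R : Type*} [Ring R] {deg : R → WithBot ℕ} (hd : IsDegreeFunction_s13 deg)
include hd

theorem map_zero : deg 0 = ⊥ := (hd.eq_bot_iff 0).2 rfl

theorem ne_zero_of_eq_coe {r : R} {k : ℕ} (h : deg r = k) : r ≠ 0 := by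
  rintro rfl
  simp [hd.map_zero] at h

theorem exists_eq_coe_s13 {r : R} (hr : r ≠ 0) : ∃ k : ℕ, deg r = k :=
  (WithBot.ne_bot_iff_exists.1 ((hd.eq_bot_iff r).not.2 hr)).imp fun _ => Eq.symm

theorem map_sum_le_sup {ι : Type*} (s : Finset ι) (f : ι → R) :
    deg (∑ i ∈ s, f i) ≤ s.sup fun i => deg (f i) := by
  classical
  induction s using Finset.induction_on with
  | empty => simp [hd.map_zero]
  | insert a s ha ih =>
    rw [sum_insert ha, sup_insert]
    exact (hd.map_add_le _ _).trans (max_le_max le_rfl ih)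

theorem map_mul_le {r s : R} {a b : WithBot ℕ} (hr : deg r ≤ a) (hs : deg s ≤ b) :
    deg (r * s) ≤ a + b :=
  (hd.map_mul r s).trans_le (add_le_add hr hs)

theorem map_vecMul_apply_le {m o : Type*} [Fintype m] {v : m → R} {M : Matrix m o R} {k : o}
    {a b : WithBot ℕ} (hv : ∀ j, deg (v j) ≤ a) (hM : ∀ j, deg (M j k) ≤ b) :
    deg (vecMul v M k) ≤ a + b :=
  (hd.map_sum_le_sup univ fun j => v j * M j k).trans <|
    Finset.sup_le fun j _ => hd.map_mul_le (hv j) (hM j)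

theorem exists_max_deg {ι : Type*} [Fintype ι] {u : ι → R} (hu : u ≠ 0) :
    ∃ k₀ : ι, ∃ δ : ℕ, deg (u k₀) = δ ∧ ∀ k, deg (u k) ≤ δ := by
  obtain ⟨k, hk⟩ := Function.ne_iff.1 hu
  obtain ⟨k₀, -, hk₀⟩ := exists_max_image univ (fun k => deg (u k)) ⟨k, mem_univ k⟩
  have hne : u k₀ ≠ 0 := fun h => hk <| (hd.eq_bot_iff _).1 <|
    le_bot_iff.1 <| (hk₀ k (mem_univ k)).trans_eq ((hd.eq_bot_iff _).2 h)
  obtain ⟨δ, hδ⟩ := hd.exists_eq_coe_s13 hne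
  exact ⟨k₀, δ, hδ, fun k => hδ ▸ hk₀ k (mem_univ k)⟩

variable [Nontrivial R]

theorem map_one : deg 1 = 0 := by
  obtain ⟨k, hk⟩ := hd.exists_eq_coe_s13 one_ne_zero
  have h := hd.map_mul 1 1
  rw [one_mul, hk] at h
  norm_cast at h
  rw [hk, show k = 0 by omega, Nat.cast_zero]

theorem map_neg_s13 (r : R) : deg (-r) = deg r := by
  have h := hd.map_mul (-1) (-1)
  rw [neg_one_mul, neg_neg, hd.map_one, eq_comm, Nat.WithBot.add_eq_zero_iff] at h
  rw [← neg_one_mul, hd.map_mul, h.1, zero_add]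

theorem map_sub_le (r s : R) : deg (r - s) ≤ max (deg r) (deg s) := by
  simpa only [sub_eq_add_neg, hd.map_neg_s13] using hd.map_add_le r (-s)

theorem map_pow {x : R} (hx : deg x = 1) (k : ℕ) : deg (x ^ k) = k := by
  induction k with
  | zero => simp [hd.map_one]
  | succ k ih => rw [pow_succ, hd.map_mul, ih, hx]; norm_cast

/-- For Ore polynomials `F[∂; σ, δ]` this is the coefficient field `F`. -/
def constants : Subring R where
  carrier := {r | deg r ≤ 0}
  mul_mem' {a b} ha hb := hd.map_mul_le ha hb |>.trans_eq (add_zero 0)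
  one_mem' := hd.map_one.le
  add_mem' {a b} ha hb := (hd.map_add_le a b).trans (max_le ha hb)
  zero_mem' := by simp [hd.map_zero]
  neg_mem' {a} ha := (hd.map_neg_s13 a).trans_le ha

def degLE (k : ℕ) : Submodule hd.constants R where
  carrier := {r | deg r ≤ k}
  add_mem' {a b} ha hb := (hd.map_add_le a b).trans (max_le ha hb)
  zero_mem' := by simp [hd.map_zero]
  smul_mem' a r hr := hd.map_mul_le a.2 hr |>.trans_eq (zero_add _)

@[simp]
theorem mem_degLE {k : ℕ} {r : R} : r ∈ hd.degLE k ↔ deg r ≤ k := Iff.rfl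

theorem constants_smul_def (a : hd.constants) (r : R) : a • r = (a : R) * r := rfl

noncomputable abbrev constantsDivisionRing (hunit : ∀ r : R, deg r = 0 → IsUnit r) :
    DivisionRing hd.constants :=
  DivisionRing.ofIsUnitOrEqZero fun a => by
    refine or_iff_not_imp_right.2 fun ha => ?_
    have ha' : (a : R) ≠ 0 := by simpa using ha
    obtain ⟨u, hu⟩ := hunit a (le_antisymm a.2 (by
      obtain ⟨k, hk⟩ := hd.exists_eq_coe_s13 ha'
      exact hk ▸ Nat.WithBot.coe_nonneg))
    have h := hd.map_mul u ↑u⁻¹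
    rw [Units.mul_inv, hd.map_one, eq_comm, Nat.WithBot.add_eq_zero_iff] at h
    refine isUnit_iff_exists.2 ⟨⟨↑u⁻¹, h.2.le⟩, ?_, ?_⟩ <;> ext <;> simp [← hu]

theorem deg_le_of_mul_blockTriangular_eq {n d : ℕ} {V H A : Matrix (Fin n) (Fin n) R}
    (hVH : V * H = A) (hH : H.BlockTriangular id)
    (hH_upper : ∀ i j, i < j → deg (H i j) < deg (H j j)) (hH_diag : ∀ j, H j j ≠ 0)
    (hA : ∀ i j, deg (A i j) ≤ d) (i j : Fin n) : deg (V i j) ≤ d := by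
  induction j using WellFoundedLT.induction generalizing i with
  | ind j ih =>
  obtain ⟨h, hh⟩ := hd.exists_eq_coe_s13 (hH_diag j)
  have hsplit : V i j * H j j = A i j - ∑ k ∈ univ.erase j, V i k * H k j := by
    rw [← hVH, mul_apply, ← add_sum_erase _ _ (mem_univ j), add_sub_cancel_right]
  have hterm : ∀ k ∈ univ.erase j, deg (V i k * H k j) ≤ d + h := by
    intro k hk
    rcases lt_or_gt_of_ne (ne_of_mem_erase hk) with hkj | hkj
    · exact hd.map_mul_le (ih k hkj i) ((hH_upper k j hkj).le.trans_eq hh)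
    · rw [hH hkj, mul_zero, hd.map_zero]
      exact bot_le
  have hdeg : deg (V i j * H j j) ≤ d + h := by
    rw [hsplit]
    refine (hd.map_sub_le _ _).trans (max_le ((hA i j).trans ?_) ?_)
    · exact_mod_cast Nat.le_add_right d h
    · exact (hd.map_sum_le_sup _ _).trans (Finset.sup_le hterm)
  rw [hd.map_mul, hh] at hdeg
  exact (WithBot.add_le_add_iff_right (WithBot.natCast_ne_bot _)).1 hdeg

section Filtration

variable (hdiv : ∀ f g : R, g ≠ 0 → ∃ q r : R, f = q * g + r ∧ deg r < deg g)
  {x : R} (hx : deg x = 1)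
include hx

theorem span_pow_le_degLE (k : ℕ) :
    Submodule.span hd.constants (Set.range fun j : Fin (k + 1) => x ^ (j : ℕ)) ≤
      hd.degLE k := by
  rw [Submodule.span_le]
  rintro _ ⟨j, rfl⟩
  rw [SetLike.mem_coe, mem_degLE, hd.map_pow hx]
  exact_mod_cast Nat.lt_succ_iff.1 j.2

include hdiv in
theorem degLE_le_span_pow (k : ℕ) :
    hd.degLE k ≤
      Submodule.span hd.constants (Set.range fun j : Fin (k + 1) => x ^ (j : ℕ)) := by
  induction k with
  | zero =>
    intro r hr
    rw [Submodule.mem_span_range_iff_exists_fun]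
    exact ⟨fun _ => ⟨r, hr⟩, by simp [constants_smul_def]⟩
  | succ k ih =>
    intro r hr
    obtain ⟨q, rem, rfl, hrem⟩ := hdiv r x (hd.ne_zero_of_eq_coe hx)
    rw [hx, Nat.WithBot.lt_one_iff_le_zero] at hrem
    have hq : deg (q * x) ≤ (k + 1 : ℕ) := by
      rw [← add_sub_cancel_right (q * x) rem]
      exact (hd.map_sub_le _ _).trans (max_le hr (hrem.trans (Nat.WithBot.coe_nonneg)))
    rw [hd.map_mul, hx, Nat.cast_succ] at hq
    replace hq : q ∈ hd.degLE k := (WithBot.add_le_add_iff_right WithBot.one_ne_bot).1 hq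
    obtain ⟨a, rfl⟩ := (Submodule.mem_span_range_iff_exists_fun _).1 (ih hq)
    rw [Submodule.mem_span_range_iff_exists_fun]
    refine ⟨Fin.cons ⟨rem, hrem⟩ a, ?_⟩
    rw [Fin.sum_univ_succ, add_comm, Finset.sum_mul]
    simp [constants_smul_def, pow_succ, mul_assoc]

variable (hunit : ∀ r : R, deg r = 0 → IsUnit r)
include hunit

theorem linearIndependent_pow (k : ℕ) :
    LinearIndependent hd.constants fun j : Fin (k + 1) => x ^ (j : ℕ) := by
  let _ := hd.constantsDivisionRing hunit
  induction k with
  | zero => simp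
  | succ k ih =>
    have hsnoc : (fun j : Fin (k + 2) => x ^ (j : ℕ)) =
        Fin.snoc (fun j : Fin (k + 1) => x ^ (j : ℕ)) (x ^ (k + 1)) := by
      funext j
      refine Fin.lastCases ?_ (fun j => ?_) j <;> simp
    rw [hsnoc, linearIndependent_finSnoc]
    refine ⟨ih, fun h => ?_⟩
    have := hd.span_pow_le_degLE hx k h
    rw [mem_degLE, hd.map_pow hx, Nat.cast_le] at this
    omega

include hdiv in
theorem finrank_degLE (k : ℕ) : Module.finrank hd.constants (hd.degLE k) = k + 1 := by
  let _ := hd.constantsDivisionRing hunit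
  rw [le_antisymm (hd.degLE_le_span_pow hdiv hx k) (hd.span_pow_le_degLE hx k),
    finrank_span_eq_card (hd.linearIndependent_pow hx hunit k), Fintype.card_fin]

include hdiv in
theorem finite_degLE (k : ℕ) : Module.Finite hd.constants (hd.degLE k) := by
  let _ := hd.constantsDivisionRing hunit
  exact Module.finite_of_finrank_pos (by rw [hd.finrank_degLE hdiv hx hunit]; omega)

include hdiv in
/-- Rank–nullity for `s ↦ ((s * V) j)_{j ≠ i}` from `(R_{≤δ})ⁿ` to `(R_{≤δ+e})ⁿ⁻¹`: as
`V * U = 1`, its kernel lies in the line spanned by the row `U i`. -/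
theorem card_mul_succ_le {n : ℕ} {U V : Matrix (Fin n) (Fin n) R} (hVU : V * U = 1)
    {i k₀ : Fin n} {δ e : ℕ} (hV : ∀ j k, deg (V j k) ≤ e) (hU : ∀ k, deg (U i k) ≤ δ)
    (hk₀ : deg (U i k₀) = δ) :
    n * (δ + 1) ≤ (n - 1) * (δ + e + 1) + 1 := by
  let _ := hd.constantsDivisionRing hunit
  have := hd.finite_degLE hdiv hx hunit
  let Ψ : (Fin n → hd.degLE δ) →ₗ[hd.constants] ({j // j ≠ i} → hd.degLE (δ + e)) :=
    { toFun s j := ⟨vecMul (fun k => (s k : R)) V j, by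
        rw [mem_degLE, Nat.cast_add]
        exact hd.map_vecMul_apply_le (fun k => (s k).2) (hV · j)⟩
      map_add' s t := by
        ext j
        simp [vecMul, dotProduct, add_mul, Finset.sum_add_distrib]
      map_smul' a s := by
        ext j
        simp [vecMul, dotProduct, constants_smul_def, Finset.mul_sum, mul_assoc] }
  have hker : LinearMap.ker Ψ ≤ hd.constants ∙ (fun k => ⟨U i k, hU k⟩) := by
    intro s hs
    let s' : Fin n → R := fun k => s k
    have hs' : s' = vecMul s' V i • U i := Matrix.eq_smul_row_of_vecMul_apply_eq_zero hVU
      fun j hj => congr_arg Subtype.val (congr_fun hs ⟨j, hj⟩)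
    have ha : deg (s' k₀) ≤ δ := (s k₀).2
    rw [congr_fun hs' k₀, Pi.smul_apply, smul_eq_mul, hd.map_mul, hk₀] at ha
    have ha : deg (vecMul s' V i) ≤ 0 := (WithBot.add_le_add_iff_right
      (WithBot.natCast_ne_bot _)).1 (ha.trans_eq (zero_add _).symm)
    refine Submodule.mem_span_singleton.2 ⟨⟨_, ha⟩, ?_⟩
    ext k
    exact (congr_fun hs' k).symm
  have hrange := Ψ.range.finrank_le
  have hspan := (Submodule.finrank_mono hker).trans (finrank_span_le_card _)
  have := Ψ.finrank_range_add_finrank_ker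
  simp only [Module.finrank_pi_fintype, hd.finrank_degLE hdiv hx hunit, sum_const, card_univ,
    Fintype.card_fin, Fintype.card_subtype_compl, Fintype.card_unique, smul_eq_mul] at this hrange
  simp only [Set.toFinset_singleton, card_singleton] at hspan
  omega

include hdiv in
theorem deg_le_of_mul_eq_one {n e : ℕ} {U V : Matrix (Fin n) (Fin n) R} (hUV : U * V = 1)
    (hVU : V * U = 1) (hV : ∀ j k, deg (V j k) ≤ e) (i j : Fin n) :
    deg (U i j) ≤ ((n - 1) * e : ℕ) := by
  have hUi : U i ≠ 0 := fun h => by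
    simpa [Matrix.mul_apply, h] using congr_fun (congr_fun hUV i) i
  obtain ⟨k₀, δ, hk₀, hU⟩ := hd.exists_max_deg hUi
  have key := hd.card_mul_succ_le hdiv hx hunit hVU hV hU hk₀
  obtain ⟨m, rfl⟩ : ∃ m, n = m + 1 := Nat.exists_eq_add_one_of_ne_zero i.pos.ne'
  refine (hU j).trans (Nat.cast_le.2 ?_)
  simp only [add_tsub_cancel_right] at key ⊢
  nlinarith

end Filtration

section Reduction

variable (hdiv : ∀ f g : R, g ≠ 0 → ∃ q r : R, f = q * g + r ∧ deg r < deg g)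
  {n N : ℕ} {G : Matrix (Fin n) (Fin n) R} {e h : Fin n → ℕ} (hG : G.BlockTriangular id)
  (hG_diag : ∀ k, deg (G k k) = e k + h k)
  (hG_upper : ∀ j k, j < k → deg (G j k) < e j + h k) (he : ∀ k, e k ≤ N)
include hdiv hG_diag hG_upper he

theorem exists_reduce_column {w : Fin n → R} (j : Fin n)
    (hw : ∀ k, j ≤ k → deg (w k) < N + h k) :
    ∃ q : R, deg q + e j < N ∧ deg ((w - q • G j) j) < e j + h j ∧
      ∀ k, j < k → deg ((w - q • G j) k) < N + h k := by
  obtain ⟨q, rem, hq, hrem⟩ :=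
    hdiv (w j) (G j j) (hd.ne_zero_of_eq_coe (k := e j + h j) (by push_cast; exact hG_diag j))
  rw [hG_diag] at hrem
  have hqj : deg (q * G j j) < N + h j := by
    rw [show q * G j j = w j - rem by rw [hq, add_sub_cancel_right]]
    refine (hd.map_sub_le _ _).trans_lt (max_lt (hw j le_rfl) (hrem.trans_le ?_))
    exact add_le_add_left (Nat.cast_le.2 (he j)) _
  rw [hd.map_mul, hG_diag, ← add_assoc,
    WithBot.add_lt_add_iff_right (WithBot.natCast_ne_bot _)] at hqj
  refine ⟨q, hqj, by simpa [hq] using hrem, fun k hjk => ?_⟩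
  have hqk : deg (q * G j k) < N + h k := by
    rw [hd.map_mul]
    calc deg q + deg (G j k) ≤ deg q + (e j + h k) :=
          add_le_add le_rfl (hG_upper j k hjk).le
      _ = deg q + e j + h k := (add_assoc _ _ _).symm
      _ < N + h k := (WithBot.add_lt_add_iff_right (WithBot.natCast_ne_bot _)).2 hqj
  exact (hd.map_sub_le _ _).trans_lt (max_lt (hw k hjk.le) hqk)

include hG in
theorem exists_reduce_row (m : ℕ) (w : Fin n → R)
    (hw : ∀ k : Fin n, m ≤ k → deg (w k) < N + h k) :
    ∃ c : Fin n → R, (∀ j : Fin n, (j : ℕ) < m → c j = 0) ∧ (∀ j, deg (c j) + e j < N) ∧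
      ∀ k : Fin n, m ≤ k → deg ((w + vecMul c G) k) < e k + h k := by
  induction hnm : n - m generalizing m w with
  | zero =>
    refine ⟨0, fun _ _ => rfl, fun j => ?_, fun k hk => absurd k.2 (by omega)⟩
    simp [hd.map_zero]
  | succ t ih =>
    let j : Fin n := ⟨m, by omega⟩
    obtain ⟨q, hq, hqj, hqk⟩ := hd.exists_reduce_column hdiv hG_diag hG_upper he j hw
    obtain ⟨c, hc0, hc, hck⟩ := ih (m + 1) (w - q • G j) (fun k hk => hqk k hk) (by omega)
    refine ⟨c - Pi.single j q, fun j' hj' => ?_, fun j' => ?_, fun k hk => ?_⟩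
    · have : j' ≠ j := Fin.ne_of_lt hj'
      simp [hc0 j' (by omega), this]
    · by_cases hj' : j' = j
      · subst hj'
        simpa [hc0 j (by simp [j]), hd.map_neg_s13] using hq
      · simpa [hj'] using hc j'
    · have hrow : w + vecMul (c - Pi.single j q) G = (w - q • G j) + vecMul c G := by
        rw [sub_vecMul, single_vecMul]
        ext
        simp only [Pi.add_apply, Pi.sub_apply, Pi.smul_apply, row_apply, smul_eq_mul]
        abel
      rw [hrow]
      rcases (show m = k ∨ m < k by omega) with hk | hk
      · obtain rfl : k = j := Fin.ext hk.symm
        rw [Pi.add_apply, hG.vecMul_apply_eq_zero fun j' hj' => hc0 j' (by omega), add_zero]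
        exact hqj
      · exact hck k hk

include hG in
theorem exists_reduction :
    ∃ C : Matrix (Fin n) (Fin n) R, (∀ i j, deg (C i j) + e j ≤ N) ∧
      (∀ i, (C * G) i i = G i i) ∧ ∀ i k, i ≠ k → deg ((C * G) i k) < e k + h k := by
  have hGrow : ∀ i k : Fin n, i < k → deg (G i k) < N + h k := fun i k hik =>
    (hG_upper i k hik).trans_le (add_le_add_left (Nat.cast_le.2 (he i)) _)
  choose c hc0 hc hck using fun i : Fin n =>
    hd.exists_reduce_row hdiv hG hG_diag hG_upper he (i + 1) (G i) fun k hk => hGrow i k (by omega)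
  let C : Matrix (Fin n) (Fin n) R := of fun i => Pi.single i 1 + c i
  have hCG : ∀ i, (C * G) i = G i + vecMul (c i) G := fun i => by
    change vecMul (Pi.single i 1 + c i) G = _
    rw [add_vecMul, single_vecMul, one_smul]
    rfl
  have hCG_left : ∀ i k, k ≤ i → (C * G) i k = G i k := fun i k hki => by
    rw [hCG, Pi.add_apply, hG.vecMul_apply_eq_zero fun j hj => hc0 i j (by omega), add_zero]
  refine ⟨C, fun i j => ?_, fun i => hCG_left i i le_rfl, fun i k hik => ?_⟩
  · by_cases hji : j = i
    · subst hji
      simpa [C, hc0 j j (by omega), hd.map_one] using he j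
    · simpa [C, hji] using (hc i j).le
  · rcases lt_or_gt_of_ne hik with hik | hki
    · exact hCG i ▸ hck i k hik
    · rw [hCG_left i k hki.le, hG hki, hd.map_zero]
      exact WithBot.bot_lt_iff_ne_bot.2 (by simp)

end Reduction

theorem exists_solution (hdiv : ∀ f g : R, g ≠ 0 → ∃ q r : R, f = q * g + r ∧ deg r < deg g)
    {x : R} (hx : deg x = 1) {n B : ℕ} {A U H : Matrix (Fin n) (Fin n) R} (hUA : U * A = H)
    (hH : H.BlockTriangular id)
    (hH_upper : ∀ i j, i < j → deg (H i j) < deg (H j j)) (h dvec : Fin n → ℕ)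
    (hh : ∀ i, deg (H i i) = h i) (hge : ∀ i, h i ≤ dvec i) (hU : ∀ i j, deg (U i j) ≤ B) :
    ∃ T : Matrix (Fin n) (Fin n) R,
      (∀ i, (T * A) i i ≠ 0 ∧ deg ((T * A) i i) = dvec i) ∧
      (∀ i j, i ≠ j → deg ((T * A) i j) < dvec j) ∧
      ∀ i j, deg (T i j) ≤ ((B + univ.sup fun i => dvec i - h i : ℕ) : WithBot ℕ) := by
  set e : Fin n → ℕ := fun i => dvec i - h i
  have hdvec : ∀ i, (dvec i : WithBot ℕ) = e i + h i := fun i => by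
    rw [← Nat.cast_add, Nat.sub_add_cancel (hge i)]
  let D : Matrix (Fin n) (Fin n) R := diagonal fun i => x ^ e i
  have hG_diag : ∀ k, deg ((D * H) k k) = dvec k := fun k => by
    rw [diagonal_mul, hd.map_mul, hd.map_pow hx, hh, hdvec]
  obtain ⟨C, hC, hCdiag, hCoff⟩ := hd.exists_reduction hdiv (G := D * H)
    ((blockTriangular_diagonal _).mul hH) (fun k => (hG_diag k).trans (hdvec k))
    (fun j k hjk => by
      rw [diagonal_mul, hd.map_mul, hd.map_pow hx, ← hh]
      exact WithBot.add_lt_add_left (WithBot.natCast_ne_bot _) (hH_upper j k hjk))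
    (fun k => le_sup (f := e) (mem_univ k))
  have hTA : C * D * U * A = C * (D * H) := by
    rw [Matrix.mul_assoc, Matrix.mul_assoc, hUA]
  refine ⟨C * D * U, fun i => ?_, fun i j hij => ?_, fun i j => ?_⟩
  · rw [hTA, hCdiag]
    exact ⟨hd.ne_zero_of_eq_coe (hG_diag i), hG_diag i⟩
  · rw [hTA, hdvec]
    exact hCoff i j hij
  · have hCD : ∀ k, deg ((C * D) i k) ≤ univ.sup e := fun k => by
      rw [mul_diagonal, hd.map_mul, hd.map_pow hx]
      exact hC i k
    refine (hd.map_vecMul_apply_le hCD (hU · j)).trans_eq ?_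
    push_cast
    exact add_comm _ _


end IsDegreeFunction_s13

theorem stmt13_general
    {R : Type*} [Ring R] [Nontrivial R]
    (degD : R → WithBot ℕ)
    (hbot : ∀ r : R, degD r = ⊥ ↔ r = 0)
    (hmul : ∀ r s : R, degD (r * s) = degD r + degD s)
    (hadd : ∀ r s : R, degD (r + s) ≤ max (degD r) (degD s))
    (hunit : ∀ r : R, degD r = 0 → IsUnit r)
    (hdivision : ∀ f g : R, g ≠ 0 → ∃ q rem : R, f = q * g + rem ∧ degD rem < degD g)
    {n : ℕ} (d : ℕ) (A U H : Matrix (Fin n) (Fin n) R)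
    (hAd : ∀ i j : Fin n, degD (A i j) ≤ ((d : ℕ) : WithBot ℕ))
    (hUuni : ∃ V : Matrix (Fin n) (Fin n) R, U * V = 1 ∧ V * U = 1)
    (hHut : ∀ i j : Fin n, j < i → H i j = 0)
    (hHdeg : ∀ i j : Fin n, i < j → degD (H i j) < degD (H j j))
    (hUA : U * A = H)
    (h dvec : Fin n → ℕ)
    (hh : ∀ i : Fin n, degD (H i i) = ((h i : ℕ) : WithBot ℕ))
    (hge : ∀ i : Fin n, h i ≤ dvec i)
    (hpartial : ∃ del : R, degD del = ((1 : ℕ) : WithBot ℕ)) :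
    ∃ T : Matrix (Fin n) (Fin n) R,
      (∀ i : Fin n, (T * A) i i ≠ 0 ∧ degD ((T * A) i i) = ((dvec i : ℕ) : WithBot ℕ)) ∧
      (∀ i j : Fin n, i ≠ j → degD ((T * A) i j) < ((dvec j : ℕ) : WithBot ℕ)) ∧
      (∀ i j : Fin n, degD (T i j) ≤
        (((n - 1) * d + Finset.univ.sup (fun i : Fin n => dvec i - h i) : ℕ) : WithBot ℕ)) := by
  obtain ⟨x, hx⟩ := hpartial
  rw [Nat.cast_one] at hx
  obtain ⟨V, hUV, hVU⟩ := hUuni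
  have hd : IsDegreeFunction_s13 degD := ⟨hbot, hmul, hadd⟩
  have hH : H.BlockTriangular id := fun i j hij => hHut i j hij
  have hVH : V * H = A := by rw [← hUA, ← Matrix.mul_assoc, hVU, Matrix.one_mul]
  have hV := hd.deg_le_of_mul_blockTriangular_eq hVH hH hHdeg
    (fun i => hd.ne_zero_of_eq_coe (hh i)) hAd
  have hU := hd.deg_le_of_mul_eq_one hdivision hx hunit hUV hVU hV
  exact hd.exists_solution hdivision hx hUA hH hHdeg h dvec hh hge hU

/-- (Existence part of the degree-constraint system.)
With `A ∈ R^{n×n}` of full left row rank, `degD A_{ij} ≤ d`, Hermite form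
`H = U·A` with diagonal degrees `h_i = degD H_{ii}`: if `d_i ≥ h_i` for all
`i` and `R` contains an element `∂` of degree `1`, then the system (2) has a
solution `T` (i.e. `(T·A)_{ii}` is nonzero of degree `d_i` and
`degD (T·A)_{ij} < d_j` for `i ≠ j`), with
`degD T_{ij} ≤ (n−1)·d + max_i (d_i − h_i)`. -/
theorem stmt13
    {R : Type*} [Ring R] [Nontrivial R] [NoZeroDivisors R]
    (degD : R → WithBot ℕ)
    (hbot : ∀ r : R, degD r = ⊥ ↔ r = 0)
    (hmul : ∀ r s : R, degD (r * s) = degD r + degD s)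
    (hadd : ∀ r s : R, degD (r + s) ≤ max (degD r) (degD s))
    (hunit : ∀ r : R, degD r = 0 → IsUnit r)
    (hdivision : ∀ f g : R, g ≠ 0 → ∃ q rem : R, f = q * g + rem ∧ degD rem < degD g)
    {n : ℕ} (d : ℕ) (A U H : Matrix (Fin n) (Fin n) R)
    (hrank : ∀ b : Fin n → R, Matrix.vecMul b A = 0 → b = 0)
    (hAd : ∀ i j : Fin n, degD (A i j) ≤ ((d : ℕ) : WithBot ℕ))
    (hUuni : ∃ V : Matrix (Fin n) (Fin n) R, U * V = 1 ∧ V * U = 1)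
    (hHut : ∀ i j : Fin n, j < i → H i j = 0)
    (hHdiag : ∀ i : Fin n, H i i ≠ 0)
    (hHdeg : ∀ i j : Fin n, i < j → degD (H i j) < degD (H j j))
    (hUA : U * A = H)
    (h dvec : Fin n → ℕ)
    (hh : ∀ i : Fin n, degD (H i i) = ((h i : ℕ) : WithBot ℕ))
    (hge : ∀ i : Fin n, h i ≤ dvec i)
    (hpartial : ∃ del : R, degD del = ((1 : ℕ) : WithBot ℕ)) :
    ∃ T : Matrix (Fin n) (Fin n) R,
      (∀ i : Fin n, (T * A) i i ≠ 0 ∧ degD ((T * A) i i) = ((dvec i : ℕ) : WithBot ℕ)) ∧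
      (∀ i j : Fin n, i ≠ j → degD ((T * A) i j) < ((dvec j : ℕ) : WithBot ℕ)) ∧
      (∀ i j : Fin n, degD (T i j) ≤
        (((n - 1) * d + Finset.univ.sup (fun i : Fin n => dvec i - h i) : ℕ) : WithBot ℕ)) :=
  stmt13_general degD hbot hmul hadd hunit hdivision d A U H hAd hUuni hHut hHdeg hUA h dvec hh hge
    hpartial
end

section
/- Suppose there exists ℓ ∈ {1,…,n} such that d_i = h_i for all i < ℓ and d_ℓ < h_ℓ. Then there is no solution T ∈ R^{n×n} for (d_1,…,d_n). -/
/-!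
Write `T·A = S·H` with `S = T·U⁻¹`. Since `H` is upper triangular, once `S ℓ j = 0` for all
`j < k` the entry `(T·A) ℓ k` collapses to `S ℓ k · H k k`, whose degree is at least `h k`
unless `S ℓ k = 0`. The constraints force `degD (T·A) ℓ k < h k` for every `k ≤ ℓ`, so by
induction on `k` the row `S ℓ` vanishes up to column `ℓ`, whence `(T·A) ℓ ℓ = 0`.
-/

section DegreeFunction

variable {R : Type*} [Ring R] (degD : R → WithBot ℕ)

theorem degD_le_degD_mul_of_ne_zero (hbot : ∀ r : R, degD r = ⊥ → r = 0)
    (hmul : ∀ r s : R, degD (r * s) = degD r + degD s) {r : R} (hr : r ≠ 0) (s : R) :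
    degD s ≤ degD (r * s) := by
  obtain ⟨m, hm⟩ := WithBot.ne_bot_iff_exists.mp (mt (hbot r) hr)
  rw [hmul, ← hm]
  exact le_add_of_nonneg_left (WithBot.coe_nonneg.mpr m.zero_le)

namespace Matrix.BlockTriangular

variable {ι : Type*} [Fintype ι] [LinearOrder ι] {S H : Matrix ι ι R}

theorem mul_apply_eq_of_apply_eq_zero (hH : H.BlockTriangular id) {i k : ι}
    (hS : ∀ j < k, S i j = 0) : (S * H) i k = S i k * H k k := by
  rw [Matrix.mul_apply]
  refine Finset.sum_eq_single k (fun j _ hjk => ?_) (by simp)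
  rcases lt_or_gt_of_ne hjk with hjk | hkj
  · rw [hS j hjk, zero_mul]
  · rw [hH hkj, mul_zero]

theorem apply_eq_zero_of_degD_mul_apply_lt (hbot : ∀ r : R, degD r = ⊥ → r = 0)
    (hmul : ∀ r s : R, degD (r * s) = degD r + degD s) (hH : H.BlockTriangular id) {i ℓ : ι}
    (hdeg : ∀ k ≤ ℓ, degD ((S * H) i k) < degD (H k k)) : ∀ k ≤ ℓ, S i k = 0 := by
  intro k
  induction k using WellFoundedLT.induction with
  | _ k ih =>
    intro hkℓ
    by_contra hS
    have hlt := hdeg k hkℓ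
    rw [hH.mul_apply_eq_of_apply_eq_zero fun j hj => ih j hj (hj.le.trans hkℓ)] at hlt
    exact (degD_le_degD_mul_of_ne_zero degD hbot hmul hS _).not_gt hlt

theorem mul_apply_eq_zero_of_degD_mul_apply_lt (hbot : ∀ r : R, degD r = ⊥ → r = 0)
    (hmul : ∀ r s : R, degD (r * s) = degD r + degD s) (hH : H.BlockTriangular id) {i ℓ : ι}
    (hdeg : ∀ k ≤ ℓ, degD ((S * H) i k) < degD (H k k)) : (S * H) i ℓ = 0 := by
  have hrow := hH.apply_eq_zero_of_degD_mul_apply_lt degD hbot hmul hdeg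
  rw [hH.mul_apply_eq_of_apply_eq_zero fun j hj => hrow j hj.le, hrow ℓ le_rfl, zero_mul]

end Matrix.BlockTriangular

end DegreeFunction

theorem stmt14_general
    {R : Type*} [Ring R]
    (degD : R → WithBot ℕ)
    (hbot : ∀ r : R, degD r = ⊥ ↔ r = 0)
    (hmul : ∀ r s : R, degD (r * s) = degD r + degD s)
    {n : ℕ} (A U H : Matrix (Fin n) (Fin n) R)
    (hUuni : ∃ V : Matrix (Fin n) (Fin n) R, U * V = 1 ∧ V * U = 1)
    (hHut : ∀ i j : Fin n, j < i → H i j = 0)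
    (hUA : U * A = H)
    (h dvec : Fin n → ℕ)
    (hh : ∀ i : Fin n, degD (H i i) = ((h i : ℕ) : WithBot ℕ))
    (ℓ : Fin n)
    (hlt : ∀ i : Fin n, i < ℓ → dvec i = h i)
    (hℓ : dvec ℓ < h ℓ) :
    ¬ ∃ T : Matrix (Fin n) (Fin n) R,
      (∀ i : Fin n, (T * A) i i ≠ 0 ∧ degD ((T * A) i i) = ((dvec i : ℕ) : WithBot ℕ)) ∧
      (∀ i j : Fin n, i ≠ j → degD ((T * A) i j) < ((dvec j : ℕ) : WithBot ℕ)) := by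
  rintro ⟨T, hdiagT, hoffT⟩
  obtain ⟨V, -, hVU⟩ := hUuni
  have hTA : T * A = T * V * H := by
    rw [← hUA, ← Matrix.mul_assoc, Matrix.mul_assoc T V U, hVU, Matrix.mul_one]
  have hdeg : ∀ k ≤ ℓ, degD ((T * V * H) ℓ k) < degD (H k k) := by
    intro k hk
    rw [← hTA, hh k]
    rcases hk.lt_or_eq with hk | rfl
    · exact hlt k hk ▸ hoffT ℓ k hk.ne'
    · exact (hdiagT k).2 ▸ WithBot.coe_lt_coe.mpr hℓ
  have hHtri : H.BlockTriangular id := fun i j hji => hHut i j hji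
  exact (hdiagT ℓ).1 (hTA ▸ hHtri.mul_apply_eq_zero_of_degD_mul_apply_lt degD
    (fun r => (hbot r).1) hmul hdeg)

/-- (Infeasibility part of the degree-constraint system.)
With `A ∈ R^{n×n}` of full left row rank, `degD A_{ij} ≤ d`, Hermite form
`H = U·A` with diagonal degrees `h_i = degD H_{ii}`: if there is an index
`ℓ` with `d_i = h_i` for all `i < ℓ` and `d_ℓ < h_ℓ`, then the system (2)
has no solution `T`. -/
theorem stmt14
    {R : Type*} [Ring R] [Nontrivial R] [NoZeroDivisors R]
    (degD : R → WithBot ℕ)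
    (hbot : ∀ r : R, degD r = ⊥ ↔ r = 0)
    (hmul : ∀ r s : R, degD (r * s) = degD r + degD s)
    (hadd : ∀ r s : R, degD (r + s) ≤ max (degD r) (degD s))
    (hunit : ∀ r : R, degD r = 0 → IsUnit r)
    (hdivision : ∀ f g : R, g ≠ 0 → ∃ q rem : R, f = q * g + rem ∧ degD rem < degD g)
    {n : ℕ} (d : ℕ) (A U H : Matrix (Fin n) (Fin n) R)
    (hrank : ∀ b : Fin n → R, Matrix.vecMul b A = 0 → b = 0)
    (hAd : ∀ i j : Fin n, degD (A i j) ≤ ((d : ℕ) : WithBot ℕ))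
    (hUuni : ∃ V : Matrix (Fin n) (Fin n) R, U * V = 1 ∧ V * U = 1)
    (hHut : ∀ i j : Fin n, j < i → H i j = 0)
    (hHdiag : ∀ i : Fin n, H i i ≠ 0)
    (hHdeg : ∀ i j : Fin n, i < j → degD (H i j) < degD (H j j))
    (hUA : U * A = H)
    (h dvec : Fin n → ℕ)
    (hh : ∀ i : Fin n, degD (H i i) = ((h i : ℕ) : WithBot ℕ))
    (ℓ : Fin n)
    (hlt : ∀ i : Fin n, i < ℓ → dvec i = h i)
    (hℓ : dvec ℓ < h ℓ) :
    ¬ ∃ T : Matrix (Fin n) (Fin n) R,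
      (∀ i : Fin n, (T * A) i i ≠ 0 ∧ degD ((T * A) i i) = ((dvec i : ℕ) : WithBot ℕ)) ∧
      (∀ i j : Fin n, i ≠ j → degD ((T * A) i j) < ((dvec j : ℕ) : WithBot ℕ)) :=
  stmt14_general degD hbot hmul A U H hUuni hHut hUA h dvec hh ℓ hlt hℓ
end
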